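/- arXiv:1609.06923 — 3 statements merged into one kernel-verified Lean document; each statement's English description precedes it below -/
import Mathlib

section
/- Let 𝒟 be a dyadic grid on a non-atomic measure space (X, μ), let m ≥ 1, let β₁, …, β_m ≥ 0 with β := Σᵢ βᵢ < 1, let Q ∈ 𝒟 with 0 < μ(Q) < ∞, let τ : 𝒟 → [0,∞) be a Carleson sequence with norm ‖τ‖_Car, and let w₁, …, w_m ≥ 0 be locally integrable. Then Σ_{Q' ⊆ Q, Q' ∈ 𝒟} τ(Q')·μ(Q')·Πᵢ ⟨wᵢ⟩_{Q'}^{βᵢ} ≤ C(β⃗) · ‖τ‖_Car · μ(Q) · Πᵢ ⟨wᵢ⟩_Q^{βᵢ}, where ⟨w⟩_Q := μ(Q)⁻¹ ∫_Q w dμ denotes the average. -/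
open MeasureTheory ENNReal
open scoped Classical NNReal

/-
Dropping the indices with `βᵢ = 0` and normalising by the averages over `Q`, the ratio
`Πᵢ ⟨wᵢ⟩_{Q'}^{βᵢ} / Πᵢ ⟨wᵢ⟩_Q^{βᵢ}` is at most `(maxᵢ ⟨wᵢ⟩_{Q'} / ⟨wᵢ⟩_Q)^β`, hence at most
`1 + Σ_k 2^{(k+1)β}` over the dyadic levels `k` with `2^k ⟨wᵢ⟩_Q ≤ ⟨wᵢ⟩_{Q'}` for some `i`.
For fixed `i` and `k` these cubes form a stopping family: its maximal elements `S` are disjoint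
and satisfy `2^k ⟨wᵢ⟩_Q μ(S) ≤ ∫_S wᵢ`, so the Carleson condition bounds the `τ`-mass of the
family by `A 2^{-k} μ(Q)`. As `β < 1`, the levels sum geometrically:
`Σ_k 2^{(k+1)β - k} = 2^β / (1 - 2^{β-1})`.
-/

/-- Average of `w` over `Q` with respect to `μ`. -/
noncomputable def avg {X : Type*} [MeasurableSpace X] (μ : Measure X)
    (Q : Set X) (w : X → ℝ≥0∞) : ℝ≥0∞ := (∫⁻ x in Q, w x ∂μ) / μ Q

theorem Finset.sum_le_sum_maximal_sum_le {α M : Type*} [Preorder α] [AddCommMonoid M]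
    [PartialOrder M] [IsOrderedAddMonoid M] [CanonicallyOrderedAdd M] (s : Finset α) (f : α → M) :
    ∑ a ∈ s, f a ≤ ∑ b ∈ s with Maximal (· ∈ s) b, ∑ a ∈ s with a ≤ b, f a := by
  rw [Finset.sum_comm' (t' := s) (s' := fun a => {b ∈ s | Maximal (· ∈ s) b ∧ a ≤ b})]
  · refine Finset.sum_le_sum fun a ha => ?_
    obtain ⟨b, hab, hb⟩ := s.exists_le_maximal ha
    exact Finset.single_le_sum (f := fun _ => f a) (fun _ _ => zero_le)
      (Finset.mem_filter.2 ⟨hb.prop, hb, hab⟩)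
  · intro b a
    simp only [Finset.mem_filter]
    constructor
    · rintro ⟨⟨hb, hmax⟩, ha, hab⟩
      exact ⟨⟨hb, hmax, hab⟩, ha⟩
    · rintro ⟨⟨hb, hmax, hab⟩, ha⟩
      exact ⟨⟨hb, hmax⟩, ha, hab⟩

theorem ENNReal.rpow_sum_of_nonneg {ι : Type*} (x : ℝ≥0∞) {s : Finset ι} {f : ι → ℝ}
    (hf : ∀ i ∈ s, 0 ≤ f i) : x ^ ∑ i ∈ s, f i = ∏ i ∈ s, x ^ f i := by
  induction s using Finset.cons_induction with
  | empty => simp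
  | cons i s hi ih =>
    rw [Finset.forall_mem_cons] at hf
    rw [Finset.sum_cons, Finset.prod_cons, ← ih hf.2,
      rpow_add_of_nonneg _ _ hf.1 (Finset.sum_nonneg hf.2)]

theorem ENNReal.prod_rpow_le_sup_rpow_sum {ι : Type*} (s : Finset ι) (y : ι → ℝ≥0∞) {β : ι → ℝ}
    (hβ : ∀ i ∈ s, 0 ≤ β i) : ∏ i ∈ s, y i ^ β i ≤ s.sup y ^ ∑ i ∈ s, β i := by
  rw [ENNReal.rpow_sum_of_nonneg _ hβ]
  exact Finset.prod_le_prod' fun i hi => rpow_le_rpow (Finset.le_sup hi) (hβ i hi)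

theorem ENNReal.rpow_le_one_add_tsum_dyadic (a : ℝ≥0∞) {b : ℝ} (hb : 0 ≤ b) :
    a ^ b ≤ 1 + ∑' k : ℕ, if 2 ^ k ≤ a then (2 ^ b) ^ (k + 1) else 0 := by
  rcases lt_or_ge a 1 with ha1 | ha1
  · exact (rpow_le_one ha1.le hb).trans le_self_add
  rcases eq_or_ne a ∞ with rfl | hat
  · rcases hb.eq_or_lt with rfl | hb
    · simp
    calc ∞ ^ b = ∑' _ : ℕ, (1 : ℝ≥0∞) := by
          rw [top_rpow_of_pos hb, tsum_const_eq_top_of_ne_zero one_ne_zero]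
      _ ≤ ∑' k : ℕ, if 2 ^ k ≤ ∞ then (2 ^ b) ^ (k + 1) else 0 := by
          gcongr with k
          rw [if_pos le_top]
          exact one_le_pow₀ (one_le_rpow one_le_two hb)
      _ ≤ _ := le_add_self
  lift a to ℝ≥0 using hat
  obtain ⟨k, hk, hk'⟩ := exists_nat_pow_near (x := a) (y := 2) (mod_cast ha1) _root_.one_lt_two
  calc (a : ℝ≥0∞) ^ b ≤ ((2 : ℝ≥0∞) ^ (k + 1)) ^ b := rpow_le_rpow (mod_cast hk'.le) hb
    _ = (2 ^ b) ^ (k + 1) := by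
        rw [← rpow_natCast, ← rpow_natCast, ← rpow_mul, ← rpow_mul, mul_comm]
    _ = if 2 ^ k ≤ (a : ℝ≥0∞) then (2 ^ b) ^ (k + 1) else 0 := (if_pos (mod_cast hk)).symm
    _ ≤ ∑' k : ℕ, if 2 ^ k ≤ (a : ℝ≥0∞) then (2 ^ b) ^ (k + 1) else 0 := ENNReal.le_tsum k
    _ ≤ _ := le_add_self

theorem ENNReal.ite_le_sup_le_sum_ite {ι : Type*} (s : Finset ι) (y : ι → ℝ≥0∞) {a : ℝ≥0∞}
    (ha : a ≠ 0) (c : ℝ≥0∞) :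
    (if a ≤ s.sup y then c else 0) ≤ ∑ i ∈ s, if a ≤ y i then c else 0 := by
  split_ifs with h
  · obtain ⟨i, hi, hai⟩ := (Finset.le_sup_iff (bot_lt_iff_ne_bot.2 ha)).1 h
    calc c = if a ≤ y i then c else 0 := (if_pos hai).symm
      _ ≤ _ := Finset.single_le_sum (f := fun i => if a ≤ y i then c else 0)
          (fun _ _ => zero_le) hi
  · exact zero_le

theorem ENNReal.prod_rpow_le_prod_rpow_mul_dyadic {ι : Type*} (s : Finset ι) {β : ι → ℝ}
    (hβ : ∀ i ∈ s, 0 ≤ β i) (a x : ι → ℝ≥0∞) (hx0 : ∀ i ∈ s, x i ≠ 0) (hxt : ∀ i ∈ s, x i ≠ ∞) :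
    ∏ i ∈ s, a i ^ β i ≤ (∏ i ∈ s, x i ^ β i) * (1 + ∑' k : ℕ, ∑ i ∈ s,
      if 2 ^ k * x i ≤ a i then (2 ^ ∑ i ∈ s, β i) ^ (k + 1) else 0) := by
  set y := fun i => a i / x i
  have hxy : ∏ i ∈ s, a i ^ β i = (∏ i ∈ s, x i ^ β i) * ∏ i ∈ s, y i ^ β i := by
    rw [← Finset.prod_mul_distrib]
    refine Finset.prod_congr rfl fun i hi => ?_
    rw [← mul_rpow_of_nonneg _ _ (hβ i hi), ENNReal.mul_div_cancel (hx0 i hi) (hxt i hi)]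
  have hlevel : ∀ k : ℕ, ∀ i ∈ s, (2 ^ k ≤ y i ↔ 2 ^ k * x i ≤ a i) := fun k i hi =>
    ENNReal.le_div_iff_mul_le (Or.inl (hx0 i hi)) (Or.inl (hxt i hi))
  rw [hxy]
  gcongr
  calc ∏ i ∈ s, y i ^ β i ≤ s.sup y ^ ∑ i ∈ s, β i := ENNReal.prod_rpow_le_sup_rpow_sum s y hβ
    _ ≤ _ := ENNReal.rpow_le_one_add_tsum_dyadic _ (Finset.sum_nonneg hβ)
    _ ≤ _ := by
        gcongr with k
        refine (ENNReal.ite_le_sup_le_sum_ite s y (by positivity) _).trans_eq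
          (Finset.sum_congr rfl fun i hi => ?_)
        simp only [hlevel k i hi]

theorem ENNReal.tsum_rpow_pow_succ_div_two_pow (b : ℝ) :
    ∑' k : ℕ, ((2 : ℝ≥0∞) ^ b) ^ (k + 1) / 2 ^ k = 2 ^ b * (1 - 2 ^ b / 2)⁻¹ := by
  rw [← ENNReal.tsum_geometric, ← ENNReal.tsum_mul_left]
  refine tsum_congr fun k => ?_
  rw [pow_succ', div_eq_mul_inv, div_eq_mul_inv, mul_pow, ENNReal.inv_pow, mul_assoc]

theorem ENNReal.prod_rpow_eq_top {ι : Type*} {s : Finset ι} {x : ι → ℝ≥0∞} {β : ι → ℝ}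
    (hβ : ∀ i ∈ s, 0 < β i) (hx0 : ∀ i ∈ s, x i ≠ 0) {i : ι} (hi : i ∈ s) (hxi : x i = ∞) :
    ∏ j ∈ s, x j ^ β j = ∞ := by
  rw [← Finset.mul_prod_erase s _ hi, hxi, top_rpow_of_pos (hβ i hi), ENNReal.top_mul]
  refine Finset.prod_ne_zero_iff.2 fun j hj => ?_
  have hj := Finset.mem_of_mem_erase hj
  simp [ENNReal.rpow_eq_zero_iff, hx0 j hj, (hβ j hj).not_gt]

noncomputable def packingConst (n : ℕ) (b : ℝ) : ℝ≥0∞ := 1 + n * (2 ^ b * (1 - 2 ^ b / 2)⁻¹)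

theorem packingConst_ne_top (n : ℕ) {b : ℝ} (hb : b < 1) : packingConst n b ≠ ∞ := by
  have hr : (2 : ℝ≥0∞) ^ b / 2 < 1 := by
    refine ENNReal.div_lt_of_lt_mul ?_
    simpa using ENNReal.rpow_lt_rpow_of_exponent_lt one_lt_two ofNat_ne_top hb
  have hinv : (1 - (2 : ℝ≥0∞) ^ b / 2)⁻¹ ≠ ∞ := ENNReal.inv_ne_top.2 (tsub_pos_of_lt hr).ne'
  simp [packingConst, ENNReal.mul_eq_top, ENNReal.rpow_eq_top_iff, hinv]

theorem packingConst_ne_zero (n : ℕ) (b : ℝ) : packingConst n b ≠ 0 := by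
  simp [packingConst]

def IsNested {X : Type*} (𝒟 : Set (Set X)) : Prop :=
  ∀ Q ∈ 𝒟, ∀ Q' ∈ 𝒟, Q ⊆ Q' ∨ Q' ⊆ Q ∨ Disjoint Q Q'

def IsCarlesonBound {X : Type*} [MeasurableSpace X] (μ : Measure X) (𝒟 : Set (Set X))
    (τ : Set X → ℝ≥0) (A : ℝ≥0∞) : Prop :=
  ∀ Q ∈ 𝒟, ∑' Q' : {R : Set X // R ∈ 𝒟 ∧ R ⊆ Q}, (τ Q' : ℝ≥0∞) * μ Q' ≤ A * μ Q

theorem IsNested.pairwiseDisjoint_maximal {X : Type*} {𝒟 : Set (Set X)} (hnest : IsNested 𝒟)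
    {T : Set (Set X)} (hT : T ⊆ 𝒟) : {S | Maximal (· ∈ T) S}.PairwiseDisjoint id := by
  intro S₁ h₁ S₂ h₂ hne
  rcases hnest S₁ (hT h₁.prop) S₂ (hT h₂.prop) with h | h | h
  · exact absurd (h₁.eq_of_le h₂.prop h) hne
  · exact absurd (h₂.eq_of_le h₁.prop h).symm hne
  · exact h

theorem avg_eq_zero_of_subset {X : Type*} [MeasurableSpace X] {μ : Measure X} {Q R : Set X}
    {u : X → ℝ≥0∞} (hQt : μ Q ≠ ∞) (hQ : avg μ Q u = 0) (hRQ : R ⊆ Q) : avg μ R u = 0 := by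
  have hint : ∫⁻ x in Q, u x ∂μ = 0 := by
    simpa [avg, ENNReal.div_eq_zero_iff, hQt] using hQ
  have hR : ∫⁻ x in R, u x ∂μ = 0 := nonpos_iff_eq_zero.1 (hint ▸ lintegral_mono_set hRQ)
  rw [avg, hR, ENNReal.zero_div]

section Carleson

variable {X : Type*} [MeasurableSpace X] {μ : Measure X} {𝒟 : Set (Set X)}
  {τ : Set X → ℝ≥0} {A : ℝ≥0∞}

theorem IsCarlesonBound.sum_le (hCar : IsCarlesonBound μ 𝒟 τ A)
    {S : Set X} (hS : S ∈ 𝒟) (F : Finset (Set X)) (hF : ∀ R ∈ F, R ∈ 𝒟 ∧ R ⊆ S) :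
    ∑ R ∈ F, (τ R : ℝ≥0∞) * μ R ≤ A * μ S := by
  rw [← Finset.sum_subtype_of_mem _ hF]
  exact (ENNReal.sum_le_tsum _).trans (hCar S hS)

theorem mul_sum_le_lintegral_of_stopping (hmeas : ∀ Q ∈ 𝒟, MeasurableSet Q)
    (hnest : IsNested 𝒟) (hCar : IsCarlesonBound μ 𝒟 τ A)
    {Q : Set X} {u : X → ℝ≥0∞} {c : ℝ≥0∞} (T : Finset (Set X))
    (hT : ∀ R ∈ T, R ∈ 𝒟 ∧ R ⊆ Q ∧ c * μ R ≤ ∫⁻ x in R, u x ∂μ) :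
    c * ∑ R ∈ T, (τ R : ℝ≥0∞) * μ R ≤ A * ∫⁻ x in Q, u x ∂μ := by
  set M := {S ∈ T | Maximal (· ∈ T) S}
  have hM : ∀ S ∈ M, S ∈ T := fun S hS => (Finset.mem_filter.1 hS).1
  have hdisj : (M : Set (Set X)).PairwiseDisjoint id :=
    (hnest.pairwiseDisjoint_maximal fun R hR => (hT R hR).1).subset
      fun S hS => (Finset.mem_filter.1 hS).2
  calc c * ∑ R ∈ T, (τ R : ℝ≥0∞) * μ R
      ≤ c * ∑ S ∈ M, ∑ R ∈ T with R ≤ S, (τ R : ℝ≥0∞) * μ R := by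
        gcongr; exact T.sum_le_sum_maximal_sum_le _
    _ ≤ c * ∑ S ∈ M, A * μ S := by
        gcongr with S hS
        exact hCar.sum_le (hT S (hM S hS)).1 _ fun R hR =>
          ⟨(hT R (Finset.mem_filter.1 hR).1).1, (Finset.mem_filter.1 hR).2⟩
    _ = A * ∑ S ∈ M, c * μ S := by
        simp only [Finset.mul_sum, mul_left_comm c A]
    _ ≤ A * ∑ S ∈ M, ∫⁻ x in S, u x ∂μ := by
        gcongr with S hS
        exact (hT S (hM S hS)).2.2
    _ = A * ∫⁻ x in ⋃ S ∈ M, S, u x ∂μ := by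
        exact congrArg (A * ·)
          (lintegral_biUnion_finset hdisj (fun S hS => hmeas S (hT S (hM S hS)).1) u).symm
    _ ≤ A * ∫⁻ x in Q, u x ∂μ := by
        gcongr
        exact Set.iUnion₂_subset fun S hS => (hT S (hM S hS)).2.1

theorem mul_tsum_avg_ge_le_lintegral (hmeas : ∀ Q ∈ 𝒟, MeasurableSet Q)
    (hnest : IsNested 𝒟) (hCar : IsCarlesonBound μ 𝒟 τ A)
    (Q : Set X) (u : X → ℝ≥0∞) (c : ℝ≥0∞) :
    c * ∑' R : {R : Set X // R ∈ 𝒟 ∧ R ⊆ Q},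
        (if c ≤ avg μ R u then (τ R : ℝ≥0∞) * μ R else 0) ≤ A * ∫⁻ x in Q, u x ∂μ := by
  rw [ENNReal.tsum_eq_iSup_sum, ENNReal.mul_iSup]
  refine iSup_le fun F => ?_
  rw [← Finset.sum_filter]
  have := mul_sum_le_lintegral_of_stopping (u := u) (c := c) hmeas hnest hCar
    ((F.filter fun R : {R : Set X // R ∈ 𝒟 ∧ R ⊆ Q} => c ≤ avg μ R u).map
      (Function.Embedding.subtype _)) fun R hR => by
      obtain ⟨⟨R, hR𝒟, hRQ⟩, hRF, rfl⟩ := Finset.mem_map.1 hR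
      exact ⟨hR𝒟, hRQ, ENNReal.mul_le_of_le_div (Finset.mem_filter.1 hRF).2⟩
  rwa [Finset.sum_map] at this

theorem tsum_avg_ge_le_div_two_pow (hmeas : ∀ Q ∈ 𝒟, MeasurableSet Q)
    (hnest : IsNested 𝒟) (hCar : IsCarlesonBound μ 𝒟 τ A)
    {Q : Set X} (hQ0 : μ Q ≠ 0) (hQt : μ Q ≠ ∞) {u : X → ℝ≥0∞} (hu0 : avg μ Q u ≠ 0)
    (hut : avg μ Q u ≠ ∞) (k : ℕ) :
    ∑' R : {R : Set X // R ∈ 𝒟 ∧ R ⊆ Q},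
        (if 2 ^ k * avg μ Q u ≤ avg μ R u then (τ R : ℝ≥0∞) * μ R else 0) ≤ A * μ Q / 2 ^ k := by
  have h := mul_tsum_avg_ge_le_lintegral hmeas hnest hCar Q u (2 ^ k * avg μ Q u)
  rw [← ENNReal.div_mul_cancel (b := ∫⁻ x in Q, u x ∂μ) hQ0 hQt] at h
  rw [ENNReal.le_div_iff_mul_le (by simp) (by simp),
    ← ENNReal.mul_le_mul_iff_right hu0 hut]
  calc avg μ Q u * (_ * 2 ^ k) = 2 ^ k * avg μ Q u * _ := by ring
    _ ≤ A * (avg μ Q u * μ Q) := h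
    _ = avg μ Q u * (A * μ Q) := by ring

theorem IsCarlesonBound.tsum_mul_eq_zero (hCar : IsCarlesonBound μ 𝒟 τ 0)
    {Q : Set X} (hQ : Q ∈ 𝒟) (f : Set X → ℝ≥0∞) :
    ∑' R : {R : Set X // R ∈ 𝒟 ∧ R ⊆ Q}, (τ R : ℝ≥0∞) * μ R * f R = 0 := by
  have h := hCar Q hQ
  rw [zero_mul, nonpos_iff_eq_zero, ENNReal.tsum_eq_zero] at h
  exact ENNReal.tsum_eq_zero.2 fun R => by rw [h R, zero_mul]

theorem tsum_mul_prod_avg_rpow_le (hmeas : ∀ Q ∈ 𝒟, MeasurableSet Q)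
    (hnest : IsNested 𝒟) (hCar : IsCarlesonBound μ 𝒟 τ A)
    {Q : Set X} (hQ : Q ∈ 𝒟) (hQ0 : μ Q ≠ 0) (hQt : μ Q ≠ ∞) {ι : Type*} (s : Finset ι)
    {β : ι → ℝ} (hβ : ∀ i ∈ s, 0 ≤ β i) (w : ι → X → ℝ≥0∞)
    (hw0 : ∀ i ∈ s, avg μ Q (w i) ≠ 0) (hwt : ∀ i ∈ s, avg μ Q (w i) ≠ ∞) :
    ∑' R : {R : Set X // R ∈ 𝒟 ∧ R ⊆ Q}, (τ R : ℝ≥0∞) * μ R * ∏ i ∈ s, avg μ R (w i) ^ β i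
      ≤ packingConst s.card (∑ i ∈ s, β i) * A * μ Q * ∏ i ∈ s, avg μ Q (w i) ^ β i := by
  set b := ∑ i ∈ s, β i
  set P := ∏ i ∈ s, avg μ Q (w i) ^ β i
  set t : {R : Set X // R ∈ 𝒟 ∧ R ⊆ Q} → ℝ≥0∞ := fun R => (τ R : ℝ≥0∞) * μ R
  set L : ℕ → ι → {R : Set X // R ∈ 𝒟 ∧ R ⊆ Q} → ℝ≥0∞ := fun k i R =>
    if 2 ^ k * avg μ Q (w i) ≤ avg μ R (w i) then t R else 0
  have hpoint : ∀ R, t R * ∏ i ∈ s, avg μ R (w i) ^ β i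
      ≤ P * (t R + ∑' k : ℕ, ∑ i ∈ s, (2 ^ b) ^ (k + 1) * L k i R) := by
    intro R
    calc t R * ∏ i ∈ s, avg μ R (w i) ^ β i
        ≤ t R * (P * (1 + ∑' k : ℕ, ∑ i ∈ s,
            if 2 ^ k * avg μ Q (w i) ≤ avg μ R (w i) then (2 ^ b) ^ (k + 1) else 0)) := by
          gcongr
          exact ENNReal.prod_rpow_le_prod_rpow_mul_dyadic s hβ _ _ hw0 hwt
      _ = P * (t R + ∑' k : ℕ, ∑ i ∈ s, (2 ^ b) ^ (k + 1) * L k i R) := by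
          rw [mul_left_comm, mul_add, mul_one, ← ENNReal.tsum_mul_left]
          congr 2
          refine tsum_congr fun k => ?_
          rw [Finset.mul_sum]
          refine Finset.sum_congr rfl fun i _ => ?_
          simp only [L]
          split_ifs <;> simp [mul_comm]
  calc ∑' R, t R * ∏ i ∈ s, avg μ R (w i) ^ β i
      ≤ ∑' R, P * (t R + ∑' k : ℕ, ∑ i ∈ s, (2 ^ b) ^ (k + 1) * L k i R) :=
        ENNReal.tsum_le_tsum hpoint
    _ = P * (∑' R, t R + ∑' k : ℕ, ∑ i ∈ s, (2 ^ b) ^ (k + 1) * ∑' R, L k i R) := by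
        rw [ENNReal.tsum_mul_left, ENNReal.tsum_add, ENNReal.tsum_comm]
        congr 2
        refine tsum_congr fun k => ?_
        rw [Summable.tsum_finsetSum fun _ _ => ENNReal.summable]
        simp only [ENNReal.tsum_mul_left]
    _ ≤ P * (A * μ Q + ∑' k : ℕ, ∑ i ∈ s, (2 ^ b) ^ (k + 1) * (A * μ Q / 2 ^ k)) := by
        gcongr with k i hi
        · exact hCar Q hQ
        · exact tsum_avg_ge_le_div_two_pow hmeas hnest hCar hQ0 hQt (hw0 i hi) (hwt i hi) k
    _ = packingConst s.card b * A * μ Q * P := by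
        have hk : ∀ k : ℕ, ∑ i ∈ s, ((2 : ℝ≥0∞) ^ b) ^ (k + 1) * (A * μ Q / 2 ^ k)
            = s.card * (A * μ Q) * (((2 : ℝ≥0∞) ^ b) ^ (k + 1) / 2 ^ k) := by
          intro k
          rw [Finset.sum_const, nsmul_eq_mul, div_eq_mul_inv, div_eq_mul_inv]
          ring
        simp only [hk, ENNReal.tsum_mul_left, ENNReal.tsum_rpow_pow_succ_div_two_pow, packingConst]
        ring

end Carleson

theorem carleson_sum_of_products_of_averages_general
    (m : ℕ) (β : Fin m → ℝ) (hβ : ∀ i, 0 ≤ β i)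
    (hβsum : ∑ i, β i < 1) :
    ∃ C : ℝ≥0∞, C ≠ ∞ ∧
      ∀ (X : Type) [MeasurableSpace X] (μ : Measure X) [NullSingletonClass μ]
        (𝒟 : Set (Set X)),
        (∀ Q ∈ 𝒟, MeasurableSet Q) →
        (∀ Q ∈ 𝒟, ∀ Q' ∈ 𝒟, Q ⊆ Q' ∨ Q' ⊆ Q ∨ Disjoint Q Q') →
        ∀ (τ : Set X → ℝ≥0) (A : ℝ≥0∞),
        -- `A` bounds the Carleson norm of `τ`
        (∀ Q ∈ 𝒟, ∑' Q' : {R : Set X // R ∈ 𝒟 ∧ R ⊆ Q},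
            (τ Q' : ℝ≥0∞) * μ Q' ≤ A * μ Q) →
        ∀ w : Fin m → X → ℝ≥0∞, (∀ i, Measurable (w i)) →
        ∀ Q ∈ 𝒟, 0 < μ Q → μ Q < ∞ →
        (∑' Q' : {R : Set X // R ∈ 𝒟 ∧ R ⊆ Q},
            (τ Q' : ℝ≥0∞) * μ Q' * ∏ i, (avg μ Q' (w i)) ^ β i)
          ≤ C * A * μ Q * ∏ i, (avg μ Q (w i)) ^ β i := by
  set s := Finset.univ.filter (β · ≠ 0)
  have hsum : ∑ i ∈ s, β i = ∑ i, β i := Finset.sum_filter_ne_zero _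
  refine ⟨packingConst s.card (∑ i ∈ s, β i), packingConst_ne_top _ (hsum ▸ hβsum), ?_⟩
  intro X _ μ _ 𝒟 hmeas hnest τ A hCar w _ Q hQ hQ0 hQt
  have hpos : ∀ i ∈ s, 0 < β i := fun i hi => (hβ i).lt_of_ne' (Finset.mem_filter.1 hi).2
  have hsupp : ∀ R, ∏ i, avg μ R (w i) ^ β i = ∏ i ∈ s, avg μ R (w i) ^ β i := fun R =>
    (Finset.prod_filter_of_ne fun i _ h => by contrapose! h; simp [h]).symm
  simp only [hsupp]
  by_cases h0 : ∃ i ∈ s, avg μ Q (w i) = 0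
  · obtain ⟨i, hi, h0⟩ := h0
    refine le_of_eq_of_le (ENNReal.tsum_eq_zero.2 fun R => ?_) zero_le
    rw [Finset.prod_eq_zero hi (by rw [avg_eq_zero_of_subset hQt.ne h0 R.2.2,
      zero_rpow_of_pos (hpos i hi)]), mul_zero]
  by_cases hA : A = 0
  · subst hA
    exact le_of_eq_of_le (IsCarlesonBound.tsum_mul_eq_zero hCar hQ
      fun R => ∏ i ∈ s, avg μ R (w i) ^ β i) zero_le
  by_cases htop : ∃ i ∈ s, avg μ Q (w i) = ∞
  · obtain ⟨i, hi, ht⟩ := htop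
    push Not at h0
    rw [ENNReal.prod_rpow_eq_top hpos h0 hi ht,
      ENNReal.mul_top (mul_ne_zero (mul_ne_zero (packingConst_ne_zero _ _) hA) hQ0.ne')]
    exact le_top
  push Not at h0 htop
  exact tsum_mul_prod_avg_rpow_le hmeas hnest hCar hQ hQ0.ne' hQt.ne s
    (fun i _ => hβ i) w h0 htop

/-- Carleson packing for products of averages with total exponent `β < 1`:
`Σ_{Q' ⊆ Q} τ(Q') μ(Q') Πᵢ ⟨wᵢ⟩_{Q'}^{βᵢ} ≤ C(β⃗) ‖τ‖_Car μ(Q) Πᵢ ⟨wᵢ⟩_Q^{βᵢ}`. -/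
theorem carleson_sum_of_products_of_averages
    (m : ℕ) (hm : 1 ≤ m) (β : Fin m → ℝ) (hβ : ∀ i, 0 ≤ β i)
    (hβsum : ∑ i, β i < 1) :
    ∃ C : ℝ≥0∞, C ≠ ∞ ∧
      ∀ (X : Type) [MeasurableSpace X] (μ : Measure X) [NullSingletonClass μ]
        (𝒟 : Set (Set X)),
        (∀ Q ∈ 𝒟, MeasurableSet Q) →
        (∀ Q ∈ 𝒟, ∀ Q' ∈ 𝒟, Q ⊆ Q' ∨ Q' ⊆ Q ∨ Disjoint Q Q') →
        ∀ (τ : Set X → ℝ≥0) (A : ℝ≥0∞),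
        -- `A` bounds the Carleson norm of `τ`
        (∀ Q ∈ 𝒟, ∑' Q' : {R : Set X // R ∈ 𝒟 ∧ R ⊆ Q},
            (τ Q' : ℝ≥0∞) * μ Q' ≤ A * μ Q) →
        ∀ w : Fin m → X → ℝ≥0∞, (∀ i, Measurable (w i)) →
        ∀ Q ∈ 𝒟, 0 < μ Q → μ Q < ∞ →
        (∑' Q' : {R : Set X // R ∈ 𝒟 ∧ R ⊆ Q},
            (τ Q' : ℝ≥0∞) * μ Q' * ∏ i, (avg μ Q' (w i)) ^ β i)
          ≤ C * A * μ Q * ∏ i, (avg μ Q (w i)) ^ β i :=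
  carleson_sum_of_products_of_averages_general m β hβ hβsum
end

section
/- Let 1 < s < ∞. There exists a constant C_s > 0 such that for every dyadic grid 𝒟 on a measure space X, every positive locally finite measure σ on X, and any nonnegative numbers λ_Q for Q ∈ 𝒟, one has ∫ ( Σ_{Q ∈ 𝒟} (λ_Q / σ(Q)) · 1_Q(x) )^s dσ(x) ≤ C_s · Σ_{Q ∈ 𝒟} λ_Q · ( σ(Q)⁻¹ Σ_{Q' ∈ 𝒟, Q' ⊆ Q} λ_{Q'} )^{s−1}. -/
/-!
Write `a_Q = λ_Q / σ(Q)`. The cubes containing a given point form a chain, and along a chain the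
elementary bound `(x + t)^s ≤ x^s + s t (x + t)^(s-1)` telescopes:
`(∑ a_Q 1_Q)^s ≤ s ∑ a_Q 1_Q (∑ a_Q' 1_Q')^(s-1)`, where the inner sum runs either over the cubes
`Q' ⊆ Q` or over the cubes `Q' ⊇ Q`.

For `s ≤ 2` take `Q' ⊆ Q` and apply Jensen's inequality for the concave power `s - 1 ≤ 1` on `Q`.
For `s > 2` take `Q' ⊇ Q`: the integral is at most `s D` with `D = ∑ λ_Q h_Q^(s-1)` and
`h_Q = ∑_{Q' ⊇ Q} a_Q'`. Telescoping `h_Q^(s-1)` once more and exchanging the two sums gives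
`D ≤ (s-1) ∑ λ_Q ρ_Q h_Q^(s-2)`, where `ρ_Q = σ(Q)⁻¹ ∑_{Q' ⊆ Q} λ_Q'`; Hölder's inequality then
bounds this by `(s-1) R^(1/(s-1)) D^(1 - 1/(s-1))` with `R = ∑ λ_Q ρ_Q^(s-1)`, and since `D` is
finite it can be absorbed: `D ≤ (s-1)^(s-1) R`.

Infinite grids reduce to finite subfamilies by monotone convergence: when the right-hand side is
finite, only countably many of its terms are nonzero, and the other cubes carry `a_Q = 0`.
-/

open MeasureTheory ENNReal
open scoped Classical NNReal

theorem Real.add_rpow_sub_rpow_le {s : ℝ} (hs : 1 ≤ s) {x t : ℝ} (hx : 0 ≤ x) (ht : 0 ≤ t) :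
    (x + t) ^ s - x ^ s ≤ s * t * (x + t) ^ (s - 1) := by
  rcases (add_nonneg hx ht).eq_or_lt with hb | hb
  · obtain ⟨rfl, rfl⟩ : x = 0 ∧ t = 0 := ⟨by linarith, by linarith⟩
    simp
  set b := x + t
  -- Bernoulli's inequality at `x / b = 1 - t / b`
  have bernoulli : 1 + s * (x / b - 1) ≤ (x / b) ^ s := by
    simpa using one_add_mul_self_le_rpow_one_add (p := s) (s := x / b - 1)
      (by linarith [div_nonneg hx hb.le]) hs
  have hbs : b ^ s = b * b ^ (s - 1) := by
    rw [← Real.rpow_one_add' hb.le (by linarith)]; norm_num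
  rw [Real.div_rpow hx hb.le, le_div_iff₀ (by positivity)] at bernoulli
  rw [hbs] at bernoulli ⊢
  field_simp at bernoulli
  nlinarith [Real.rpow_nonneg hb.le (s - 1)]

theorem ENNReal.add_rpow_le_rpow_add_mul_add_rpow_sub_one {s : ℝ} (hs : 1 ≤ s) (x t : ℝ≥0∞) :
    (x + t) ^ s ≤ x ^ s + ENNReal.ofReal s * t * (x + t) ^ (s - 1) := by
  have hs0 : 0 < s := by linarith
  rcases eq_or_ne t ⊤ with rfl | ht
  · have : (x + ⊤) ^ (s - 1) ≠ 0 := by simp [ENNReal.rpow_eq_zero_iff]; linarith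
    rw [ENNReal.mul_top (ENNReal.ofReal_pos.2 hs0).ne', ENNReal.top_mul this]
    simp
  rcases eq_or_ne x ⊤ with rfl | hx
  · simp [ENNReal.top_rpow_of_pos hs0]
  have hx0 := ENNReal.toReal_nonneg (a := x)
  have ht0 := ENNReal.toReal_nonneg (a := t)
  rw [← ENNReal.ofReal_toReal hx, ← ENNReal.ofReal_toReal ht, ← ENNReal.ofReal_add hx0 ht0,
    ENNReal.ofReal_rpow_of_nonneg (by positivity) hs0.le, ENNReal.ofReal_rpow_of_nonneg hx0 hs0.le,
    ENNReal.ofReal_rpow_of_nonneg (by positivity) (by linarith), ← ENNReal.ofReal_mul hs0.le,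
    ← ENNReal.ofReal_mul (by positivity), ← ENNReal.ofReal_add (by positivity) (by positivity)]
  exact ENNReal.ofReal_le_ofReal
    (sub_le_iff_le_add'.1 (Real.add_rpow_sub_rpow_le hs hx0 ht0))

theorem ENNReal.rpow_sum_le_mul_sum_mul_rpow_sum_le {ι α : Type*} [Preorder α] {s : ℝ}
    (hs : 1 ≤ s) (Q : ι → α) (t : ι → ℝ≥0∞) (F : Finset ι)
    (hF : ∀ i ∈ F, ∀ j ∈ F, t i ≠ 0 → t j ≠ 0 → Q i ≤ Q j ∨ Q j ≤ Q i) :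
    (∑ i ∈ F, t i) ^ s ≤
      ENNReal.ofReal s * ∑ i ∈ F, t i * (∑ j ∈ F with Q j ≤ Q i, t j) ^ (s - 1) := by
  induction F using Finset.strongInduction with
  | H F ih =>
  rcases (F.filter (t · ≠ 0)).eq_empty_or_nonempty with hzero | hne
  · rw [← Finset.sum_filter_ne_zero, hzero, Finset.sum_empty,
      ENNReal.zero_rpow_of_pos (by linarith)]
    exact zero_le
  -- peel off a term `t m` whose index is maximal among the nonzero terms
  obtain ⟨m, hm, hmax⟩ := (F.filter (t · ≠ 0)).exists_maximalFor Q hne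
  obtain ⟨hmF, hm0⟩ := Finset.mem_filter.1 hm
  have hbelow : ∀ j ∈ F, t j ≠ 0 → Q j ≤ Q m := fun j hj htj =>
    (hF j hj m hmF htj hm0).elim id (hmax (Finset.mem_filter.2 ⟨hj, htj⟩))
  have hsplit : ∑ j ∈ F, t j = ∑ j ∈ F.erase m, t j + t m := (Finset.sum_erase_add _ _ hmF).symm
  have ih' := ih (F.erase m) (Finset.erase_ssubset hmF) fun i hi j hj =>
    hF i (Finset.mem_of_mem_erase hi) j (Finset.mem_of_mem_erase hj)
  calc (∑ j ∈ F, t j) ^ s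
      ≤ (∑ j ∈ F.erase m, t j) ^ s + ENNReal.ofReal s * t m * (∑ j ∈ F, t j) ^ (s - 1) := by
        rw [hsplit]; exact ENNReal.add_rpow_le_rpow_add_mul_add_rpow_sub_one hs _ _
    _ ≤ ENNReal.ofReal s * ∑ i ∈ F.erase m, t i * (∑ j ∈ F with Q j ≤ Q i, t j) ^ (s - 1) +
          ENNReal.ofReal s * (t m * (∑ j ∈ F with Q j ≤ Q m, t j) ^ (s - 1)) := by
        rw [Finset.sum_filter_of_ne hbelow, ← mul_assoc]
        refine add_le_add (ih'.trans ?_) le_rfl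
        gcongr
        exact Finset.erase_subset _ _
    _ = ENNReal.ofReal s * ∑ i ∈ F, t i * (∑ j ∈ F with Q j ≤ Q i, t j) ^ (s - 1) := by
        rw [← mul_add, Finset.sum_erase_add _ _ hmF]

theorem MeasureTheory.lintegral_rpow_le_rpow_lintegral_mul_measure_univ {α : Type*}
    [MeasurableSpace α] (μ : Measure α) {p : ℝ} (hp0 : 0 < p) (hp1 : p ≤ 1) {f : α → ℝ≥0∞}
    (hf : AEMeasurable f μ) :
    ∫⁻ x, f x ^ p ∂μ ≤ (∫⁻ x, f x ∂μ) ^ p * μ Set.univ ^ (1 - p) := by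
  rcases hp1.eq_or_lt with rfl | hp1
  · simp
  -- Hölder with the exponents `1 / p` and `1 / (1 - p)`, against the constant function `1`
  have := ENNReal.lintegral_mul_le_Lp_mul_Lq μ (Real.HolderConjugate.inv_one_sub_inv hp0 hp1)
    (hf.pow_const p) (aemeasurable_const (b := 1))
  simpa [← ENNReal.rpow_mul, hp0.ne'] using this

theorem ENNReal.sum_mul_mul_rpow_sub_one_le {ι : Type*} (F : Finset ι) (w f g : ι → ℝ≥0∞)
    {p q : ℝ} (hpq : p.HolderConjugate q) :
    ∑ i ∈ F, w i * f i * g i ^ (p - 1) ≤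
      (∑ i ∈ F, w i * f i ^ p) ^ (1 / p) * (∑ i ∈ F, w i * g i ^ p) ^ (1 / q) := by
  have hp := hpq.pos
  have hq := hpq.symm.pos
  -- split the weight as `w = w ^ (1 / p) * w ^ (1 / q)` and apply Hölder's inequality
  calc ∑ i ∈ F, w i * f i * g i ^ (p - 1)
      = ∑ i ∈ F, (w i ^ (1 / p) * f i) * (w i ^ (1 / q) * g i ^ (p - 1)) := by
        refine Finset.sum_congr rfl fun i _ => ?_
        rw [show w i ^ (1 / p) * f i * (w i ^ (1 / q) * g i ^ (p - 1)) =
            w i ^ (1 / p) * w i ^ (1 / q) * f i * g i ^ (p - 1) by ring,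
          ← ENNReal.rpow_add_of_nonneg _ _ (by positivity) (by positivity), one_div, one_div,
          hpq.inv_add_inv_eq_one, ENNReal.rpow_one]
    _ ≤ (∑ i ∈ F, (w i ^ (1 / p) * f i) ^ p) ^ (1 / p) *
          (∑ i ∈ F, (w i ^ (1 / q) * g i ^ (p - 1)) ^ q) ^ (1 / q) :=
        ENNReal.inner_le_Lp_mul_Lq F _ _ hpq
    _ = (∑ i ∈ F, w i * f i ^ p) ^ (1 / p) * (∑ i ∈ F, w i * g i ^ p) ^ (1 / q) := by
        simp only [ENNReal.mul_rpow_of_nonneg _ _ hp.le, ENNReal.mul_rpow_of_nonneg _ _ hq.le,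
          ← ENNReal.rpow_mul, one_div_mul_cancel hp.ne', one_div_mul_cancel hq.ne',
          hpq.sub_one_mul_conj, ENNReal.rpow_one]

theorem ENNReal.le_rpow_mul_of_le_mul_rpow_mul_rpow {p q : ℝ} (hpq : p.HolderConjugate q)
    {c R D : ℝ≥0∞} (hD : D ≠ ⊤) (h : D ≤ c * (R ^ (1 / p) * D ^ (1 / q))) : D ≤ c ^ p * R := by
  rcases eq_or_ne D 0 with rfl | hD0
  · exact zero_le
  have hp := hpq.pos
  have hDq0 : D ^ (1 / q) ≠ 0 := by simp [hD0, hD, hpq.symm.pos]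
  have hDqtop : D ^ (1 / q) ≠ ⊤ := by simp [hD0, hD, hpq.symm.pos]
  have key : D ^ p⁻¹ ≤ c * R ^ (1 / p) := by
    rw [← ENNReal.mul_le_mul_iff_left hDq0 hDqtop]
    calc D ^ p⁻¹ * D ^ (1 / q) = D := by
          rw [← ENNReal.rpow_add _ _ hD0 hD, one_div, hpq.inv_add_inv_eq_one, ENNReal.rpow_one]
      _ ≤ c * R ^ (1 / p) * D ^ (1 / q) := h.trans_eq (mul_assoc _ _ _).symm
  rwa [ENNReal.rpow_inv_le_iff hp, ENNReal.mul_rpow_of_nonneg _ _ hp.le, ← ENNReal.rpow_mul,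
    one_div_mul_cancel hp.ne', ENNReal.rpow_one] at key

theorem ENNReal.div_eq_zero_of_mul_div_rpow_eq_zero {a b c : ℝ≥0∞} {p : ℝ} (hp : 0 < p)
    (hab : a ≤ b) (h : a * (b / c) ^ p = 0) : a / c = 0 := by
  rcases mul_eq_zero.1 h with rfl | h
  · simp
  rw [ENNReal.rpow_eq_zero_iff_of_pos hp, ENNReal.div_eq_zero_iff] at h
  rcases h with rfl | rfl
  · simp [nonpos_iff_eq_zero.1 hab]
  · simp

theorem ENNReal.ne_top_and_ne_zero_and_ne_top_of_mul_div_rpow {a b c : ℝ≥0∞} {p : ℝ} (hp : 0 < p)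
    (hab : a ≤ b) (h0 : a * (b / c) ^ p ≠ 0) (htop : a * (b / c) ^ p ≠ ⊤) :
    a ≠ ⊤ ∧ c ≠ 0 ∧ c ≠ ⊤ := by
  refine ⟨?_, ?_, ?_⟩ <;> rintro rfl
  · obtain rfl : b = ⊤ := top_le_iff.1 hab
    rcases eq_or_ne c ⊤ with rfl | hc
    · simp [hp] at h0
    · simp [ENNReal.top_div_of_ne_top hc, hp] at htop
  · have ha : a ≠ 0 := left_ne_zero_of_mul h0
    have hb : b ≠ 0 := (pos_iff_ne_zero.2 ha).trans_le hab |>.ne'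
    simp [ENNReal.div_zero hb, hp, ha] at htop
  · simp [hp] at h0

theorem MeasureTheory.lintegral_rpow_tsum_le_of_forall_finset {ι X : Type*} [MeasurableSpace X]
    {μ : Measure X} {f : ι → X → ℝ≥0∞} (hf : ∀ i, Measurable (f i)) {S : Set ι}
    (hS : S.Countable) (hfS : ∀ i ∉ S, f i = 0) {s : ℝ} (hs : 0 < s) {B : ℝ≥0∞}
    (hB : ∀ F : Finset ι, ↑F ⊆ S → ∫⁻ x, (∑ i ∈ F, f i x) ^ s ∂μ ≤ B) :
    ∫⁻ x, (∑' i, f i x) ^ s ∂μ ≤ B := by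
  have := hS.to_subtype
  have hsum : ∀ x, (∑' i, f i x) ^ s = ⨆ F : Finset S, (∑ i ∈ F, f i x) ^ s := by
    intro x
    rw [← tsum_subtype_eq_of_support_subset (s := S) fun i hi =>
      by_contra fun hiS => hi (by simp [hfS i hiS]), ENNReal.tsum_eq_iSup_sum]
    exact (ENNReal.monotone_rpow_of_nonneg hs.le).map_iSup_of_continuousAt
      ENNReal.continuous_rpow_const.continuousAt (ENNReal.zero_rpow_of_pos hs)
  simp_rw [hsum]
  rw [lintegral_iSup_directed
    (fun F : Finset S => ((Finset.measurable_sum F fun i _ => hf i).pow_const s).aemeasurable)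
    (Monotone.directed_le fun F G hFG x =>
      ENNReal.rpow_le_rpow (Finset.sum_le_sum_of_subset hFG) hs.le)]
  refine iSup_le fun F => ?_
  simpa [Finset.sum_map] using hB (F.map (Function.Embedding.subtype _)) (by simp)

theorem lintegral_indicator_mul_rpow_sum_subset_le {X : Type*} [MeasurableSpace X]
    {σ : Measure X} {F : Finset (Set X)} (hmeas : ∀ Q ∈ F, MeasurableSet Q) {p : ℝ}
    (hp0 : 0 < p) (hp1 : p ≤ 1) (lam : Set X → ℝ≥0∞) {Q : Set X} (hQ : MeasurableSet Q)
    (hσ0 : σ Q ≠ 0) (hσtop : σ Q ≠ ⊤) :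
    ∫⁻ x, Q.indicator (fun _ => lam Q / σ Q) x *
        (∑ Q' ∈ F with Q' ⊆ Q, Q'.indicator (fun _ => lam Q' / σ Q') x) ^ p ∂σ ≤
      lam Q * ((∑ Q' ∈ F with Q' ⊆ Q, lam Q') / σ Q) ^ p := by
  set g : X → ℝ≥0∞ := fun x => ∑ Q' ∈ F with Q' ⊆ Q, Q'.indicator (fun _ => lam Q' / σ Q') x
  set A := ∑ Q' ∈ F with Q' ⊆ Q, lam Q'
  have hmeas' : ∀ Q' ∈ F.filter (· ⊆ Q), MeasurableSet Q' := fun Q' hQ' =>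
    hmeas Q' (Finset.mem_filter.1 hQ').1
  have hg : Measurable g :=
    Finset.measurable_sum _ fun Q' hQ' => measurable_const.indicator (hmeas' Q' hQ')
  have hgA : ∫⁻ x in Q, g x ∂σ ≤ A := by
    refine (setLIntegral_le_lintegral Q g).trans ?_
    rw [lintegral_finsetSum _ fun Q' hQ' => measurable_const.indicator (hmeas' Q' hQ')]
    refine Finset.sum_le_sum fun Q' hQ' => ?_
    rw [lintegral_indicator_const (hmeas' Q' hQ'), mul_comm]
    exact ENNReal.mul_div_le
  calc ∫⁻ x, Q.indicator (fun _ => lam Q / σ Q) x * g x ^ p ∂σ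
      = lam Q / σ Q * ∫⁻ x in Q, g x ^ p ∂σ := by
        rw [← lintegral_const_mul _ (hg.pow_const p), ← lintegral_indicator hQ]
        exact lintegral_congr fun x => (Set.indicator_mul_left Q _ (fun x => g x ^ p)).symm
    _ ≤ lam Q / σ Q * ((∫⁻ x in Q, g x ∂σ) ^ p * σ Q ^ (1 - p)) := by
        gcongr
        simpa using lintegral_rpow_le_rpow_lintegral_mul_measure_univ (σ.restrict Q) hp0 hp1
          hg.aemeasurable
    _ ≤ lam Q / σ Q * (A ^ p * σ Q ^ (1 - p)) := by gcongr
    _ = lam Q * (A / σ Q) ^ p := by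
        rw [ENNReal.div_rpow_of_nonneg _ _ hp0.le, ENNReal.rpow_sub _ _ hσ0 hσtop,
          ENNReal.rpow_one]
        simp only [div_eq_mul_inv]
        calc lam Q * (σ Q)⁻¹ * (A ^ p * (σ Q * (σ Q ^ p)⁻¹))
            = lam Q * (A ^ p * (σ Q ^ p)⁻¹) * ((σ Q)⁻¹ * σ Q) := by ring
          _ = lam Q * (A ^ p * (σ Q ^ p)⁻¹) := by
            rw [ENNReal.inv_mul_cancel hσ0 hσtop, mul_one]

theorem sum_filter_subset_le_tsum {X : Type*} {𝒟 : Set (Set X)} {G : Finset (Set X)}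
    (hG : ↑G ⊆ 𝒟) (lam : Set X → ℝ≥0∞) (Q : Set X) :
    ∑ Q' ∈ G with Q' ⊆ Q, lam Q' ≤ ∑' Q' : {R : Set X // R ∈ 𝒟 ∧ R ⊆ Q}, lam Q' := by
  calc ∑ Q' ∈ G with Q' ⊆ Q, lam Q'
      = ∑ Q' ∈ G.subtype fun R => R ∈ 𝒟 ∧ R ⊆ Q, lam Q' := by
        rw [Finset.sum_subtype_eq_sum_filter]
        exact Finset.sum_congr (Finset.filter_congr fun R hR => by simp [hG hR]) fun _ _ => rfl
    _ ≤ _ := ENNReal.sum_le_tsum _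

def IsNestedOrDisjoint {X : Type*} (𝒟 : Set (Set X)) : Prop :=
  ∀ Q ∈ 𝒟, ∀ Q' ∈ 𝒟, Q ⊆ Q' ∨ Q' ⊆ Q ∨ Disjoint Q Q'

namespace IsNestedOrDisjoint

variable {X : Type*} {𝒟 : Set (Set X)}

theorem mono (h : IsNestedOrDisjoint 𝒟) {𝒞 : Set (Set X)} (h𝒞 : 𝒞 ⊆ 𝒟) :
    IsNestedOrDisjoint 𝒞 :=
  fun Q hQ Q' hQ' => h Q (h𝒞 hQ) Q' (h𝒞 hQ')

theorem subset_or_subset (h : IsNestedOrDisjoint 𝒟) {Q Q' : Set X} (hQ : Q ∈ 𝒟) (hQ' : Q' ∈ 𝒟)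
    {x : X} (hx : x ∈ Q) (hx' : x ∈ Q') : Q ⊆ Q' ∨ Q' ⊆ Q :=
  (h Q hQ Q' hQ').imp_right fun h' =>
    h'.resolve_right (Set.not_disjoint_iff.2 ⟨x, hx, hx'⟩)

variable {F : Finset (Set X)}

theorem rpow_sum_indicator_le_sum_subset (hF : IsNestedOrDisjoint (F : Set (Set X))) {s : ℝ}
    (hs : 1 ≤ s) (a : Set X → ℝ≥0∞) (x : X) :
    (∑ Q ∈ F, Q.indicator (fun _ => a Q) x) ^ s ≤ ENNReal.ofReal s *
      ∑ Q ∈ F, Q.indicator (fun _ => a Q) x *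
        (∑ Q' ∈ F with Q' ⊆ Q, Q'.indicator (fun _ => a Q') x) ^ (s - 1) :=
  ENNReal.rpow_sum_le_mul_sum_mul_rpow_sum_le hs id _ F fun _ hQ _ hQ' h h' =>
    hF.subset_or_subset hQ hQ' (Set.mem_of_indicator_ne_zero h) (Set.mem_of_indicator_ne_zero h')

theorem rpow_sum_indicator_le_sum_superset (hF : IsNestedOrDisjoint (F : Set (Set X))) {s : ℝ}
    (hs : 1 ≤ s) (a : Set X → ℝ≥0∞) (x : X) :
    (∑ Q ∈ F, Q.indicator (fun _ => a Q) x) ^ s ≤ ENNReal.ofReal s *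
      ∑ Q ∈ F, Q.indicator (fun _ => a Q) x * (∑ Q' ∈ F with Q ⊆ Q', a Q') ^ (s - 1) := by
  refine (ENNReal.rpow_sum_le_mul_sum_mul_rpow_sum_le hs OrderDual.toDual _ F
    fun _ hQ _ hQ' h h' => (hF.subset_or_subset hQ hQ' (Set.mem_of_indicator_ne_zero h)
      (Set.mem_of_indicator_ne_zero h')).symm).trans ?_
  gcongr with Q
  exact Finset.sum_le_sum fun Q' _ => Set.indicator_apply_le fun _ => le_rfl

theorem sum_mul_rpow_sum_superset_le (hF : IsNestedOrDisjoint (F : Set (Set X)))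
    (hne : ∀ Q ∈ F, Q.Nonempty) {p : ℝ} (hp : 1 ≤ p) (lam a : Set X → ℝ≥0∞) :
    ∑ Q ∈ F, lam Q * (∑ Q' ∈ F with Q ⊆ Q', a Q') ^ p ≤ ENNReal.ofReal p *
      ∑ Q ∈ F, a Q * (∑ Q' ∈ F with Q' ⊆ Q, lam Q') * (∑ Q' ∈ F with Q ⊆ Q', a Q') ^ (p - 1) := by
  set above : Set X → ℝ≥0∞ := fun Q => ∑ Q' ∈ F with Q ⊆ Q', a Q'
  -- the cubes containing a fixed cube `Q` form a chain
  have key : ∀ Q ∈ F,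
      above Q ^ p ≤ ENNReal.ofReal p * ∑ Q' ∈ F with Q ⊆ Q', a Q' * above Q' ^ (p - 1) := by
    intro Q hQ
    obtain ⟨x, hx⟩ := hne Q hQ
    refine (ENNReal.rpow_sum_le_mul_sum_mul_rpow_sum_le hp OrderDual.toDual a _
      fun Q₁ hQ₁ Q₂ hQ₂ _ _ => ?_).trans ?_
    · rw [Finset.mem_filter] at hQ₁ hQ₂
      exact (hF.subset_or_subset hQ₁.1 hQ₂.1 (hQ₁.2 hx) (hQ₂.2 hx)).symm
    · gcongr with Q'
      exact Finset.sum_le_sum_of_subset (Finset.filter_subset_filter _ (Finset.filter_subset _ _))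
  calc ∑ Q ∈ F, lam Q * above Q ^ p
      ≤ ∑ Q ∈ F, lam Q * (ENNReal.ofReal p * ∑ Q' ∈ F with Q ⊆ Q', a Q' * above Q' ^ (p - 1)) :=
        by gcongr with Q hQ; exact key Q hQ
    _ = ENNReal.ofReal p *
          ∑ Q ∈ F, ∑ Q' ∈ F with Q ⊆ Q', lam Q * (a Q' * above Q' ^ (p - 1)) := by
        simp only [Finset.mul_sum, mul_left_comm]
    _ = ENNReal.ofReal p *
          ∑ Q' ∈ F, ∑ Q ∈ F with Q ⊆ Q', lam Q * (a Q' * above Q' ^ (p - 1)) := by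
        rw [Finset.sum_comm' (t' := F) (s' := fun Q' => {Q ∈ F | Q ⊆ Q'}) fun Q Q' => by
          simp only [Finset.mem_filter]; tauto]
    _ = ENNReal.ofReal p * ∑ Q ∈ F, a Q * (∑ Q' ∈ F with Q' ⊆ Q, lam Q') * above Q ^ (p - 1) := by
        simp only [← Finset.sum_mul]
        congr 1
        exact Finset.sum_congr rfl fun Q _ => by ring

variable [MeasurableSpace X] {σ : Measure X}

theorem lintegral_rpow_sum_indicator_le_sum_mul_rpow_sum_superset
    (hF : IsNestedOrDisjoint (F : Set (Set X))) (hmeas : ∀ Q ∈ F, MeasurableSet Q) {s : ℝ}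
    (hs : 1 ≤ s) (lam : Set X → ℝ≥0∞) :
    ∫⁻ x, (∑ Q ∈ F, Q.indicator (fun _ => lam Q / σ Q) x) ^ s ∂σ ≤ ENNReal.ofReal s *
      ∑ Q ∈ F, lam Q * (∑ Q' ∈ F with Q ⊆ Q', lam Q' / σ Q') ^ (s - 1) := by
  set H : Set X → ℝ≥0∞ := fun Q => (∑ Q' ∈ F with Q ⊆ Q', lam Q' / σ Q') ^ (s - 1)
  calc ∫⁻ x, (∑ Q ∈ F, Q.indicator (fun _ => lam Q / σ Q) x) ^ s ∂σ
      ≤ ∫⁻ x, ENNReal.ofReal s * ∑ Q ∈ F, Q.indicator (fun _ => lam Q / σ Q * H Q) x ∂σ :=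
        lintegral_mono fun x => (hF.rpow_sum_indicator_le_sum_superset hs _ x).trans_eq <| by
          simp only [Set.indicator_mul_const, H]
    _ = ENNReal.ofReal s * ∑ Q ∈ F, σ Q * (lam Q / σ Q) * H Q := by
        rw [lintegral_const_mul _ (Finset.measurable_sum _ fun Q hQ =>
            measurable_const.indicator (hmeas Q hQ)),
          lintegral_finsetSum _ fun Q hQ => measurable_const.indicator (hmeas Q hQ)]
        congr 1
        refine Finset.sum_congr rfl fun Q hQ => ?_
        rw [lintegral_indicator_const (hmeas Q hQ), mul_comm]
        ring
    _ ≤ ENNReal.ofReal s * ∑ Q ∈ F, lam Q * H Q := by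
        gcongr with Q
        exact ENNReal.mul_div_le

theorem lintegral_rpow_sum_indicator_le_of_two_lt (hF : IsNestedOrDisjoint (F : Set (Set X)))
    (hmeas : ∀ Q ∈ F, MeasurableSet Q) {s : ℝ} (hs : 2 < s) (lam : Set X → ℝ≥0∞)
    (hlam : ∀ Q ∈ F, lam Q ≠ ⊤) (hσ : ∀ Q ∈ F, σ Q ≠ 0) :
    ∫⁻ x, (∑ Q ∈ F, Q.indicator (fun _ => lam Q / σ Q) x) ^ s ∂σ ≤
      ENNReal.ofReal s * ENNReal.ofReal (s - 1) ^ (s - 1) *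
        ∑ Q ∈ F, lam Q * ((∑ Q' ∈ F with Q' ⊆ Q, lam Q') / σ Q) ^ (s - 1) := by
  set p := s - 1
  have hp : 1 < p := by linarith
  have hpq := Real.HolderConjugate.conjExponent hp
  set above : Set X → ℝ≥0∞ := fun Q => ∑ Q' ∈ F with Q ⊆ Q', lam Q' / σ Q'
  set ρ : Set X → ℝ≥0∞ := fun Q => (∑ Q' ∈ F with Q' ⊆ Q, lam Q') / σ Q
  set D := ∑ Q ∈ F, lam Q * above Q ^ p
  set R := ∑ Q ∈ F, lam Q * ρ Q ^ p
  have hD : D ≠ ⊤ := by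
    refine ENNReal.sum_ne_top.2 fun Q hQ => ENNReal.mul_ne_top (hlam Q hQ) ?_
    refine ENNReal.rpow_ne_top_of_nonneg (by linarith) (ENNReal.sum_ne_top.2 fun Q' hQ' => ?_)
    have hQ' := (Finset.mem_filter.1 hQ').1
    exact ENNReal.div_ne_top (hlam Q' hQ') (hσ Q' hQ')
  have hDR : D ≤ ENNReal.ofReal p * (R ^ (1 / p) * D ^ (1 / p.conjExponent)) := by
    calc D ≤ ENNReal.ofReal p * ∑ Q ∈ F, lam Q * ρ Q * above Q ^ (p - 1) := by
          refine (hF.sum_mul_rpow_sum_superset_le (fun Q hQ => nonempty_of_measure_ne_zero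
            (hσ Q hQ)) hp.le lam _).trans_eq ?_
          congr 1
          refine Finset.sum_congr rfl fun Q _ => ?_
          simp only [ρ]
          rw [div_eq_mul_inv, div_eq_mul_inv]
          ring
      _ ≤ _ := by gcongr; exact ENNReal.sum_mul_mul_rpow_sub_one_le F lam ρ above hpq
  calc ∫⁻ x, (∑ Q ∈ F, Q.indicator (fun _ => lam Q / σ Q) x) ^ s ∂σ
      ≤ ENNReal.ofReal s * D :=
        hF.lintegral_rpow_sum_indicator_le_sum_mul_rpow_sum_superset hmeas (by linarith) lam
    _ ≤ ENNReal.ofReal s * (ENNReal.ofReal p ^ p * R) := by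
        gcongr; exact ENNReal.le_rpow_mul_of_le_mul_rpow_mul_rpow hpq hD hDR
    _ = _ := (mul_assoc _ _ _).symm

theorem lintegral_rpow_sum_indicator_le_of_le_two (hF : IsNestedOrDisjoint (F : Set (Set X)))
    (hmeas : ∀ Q ∈ F, MeasurableSet Q) {s : ℝ} (hs1 : 1 < s) (hs2 : s ≤ 2)
    (lam : Set X → ℝ≥0∞) (hσ0 : ∀ Q ∈ F, σ Q ≠ 0) (hσtop : ∀ Q ∈ F, σ Q ≠ ⊤) :
    ∫⁻ x, (∑ Q ∈ F, Q.indicator (fun _ => lam Q / σ Q) x) ^ s ∂σ ≤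
      ENNReal.ofReal s * ∑ Q ∈ F, lam Q * ((∑ Q' ∈ F with Q' ⊆ Q, lam Q') / σ Q) ^ (s - 1) := by
  have hind : ∀ Q ∈ F, Measurable (Q.indicator fun _ => lam Q / σ Q) := fun Q hQ =>
    measurable_const.indicator (hmeas Q hQ)
  calc ∫⁻ x, (∑ Q ∈ F, Q.indicator (fun _ => lam Q / σ Q) x) ^ s ∂σ
      ≤ ∫⁻ x, ENNReal.ofReal s * ∑ Q ∈ F, Q.indicator (fun _ => lam Q / σ Q) x *
          (∑ Q' ∈ F with Q' ⊆ Q, Q'.indicator (fun _ => lam Q' / σ Q') x) ^ (s - 1) ∂σ :=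
        lintegral_mono fun x => hF.rpow_sum_indicator_le_sum_subset hs1.le _ x
    _ = ENNReal.ofReal s * ∑ Q ∈ F, ∫⁻ x, Q.indicator (fun _ => lam Q / σ Q) x *
          (∑ Q' ∈ F with Q' ⊆ Q, Q'.indicator (fun _ => lam Q' / σ Q') x) ^ (s - 1) ∂σ := by
        rw [lintegral_const_mul' _ _ ENNReal.ofReal_ne_top]
        congr 1
        refine lintegral_finsetSum _ fun Q hQ => (hind Q hQ).mul ?_
        exact (Finset.measurable_sum _ fun Q' hQ' =>
          hind Q' (Finset.mem_filter.1 hQ').1).pow_const _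
    _ ≤ ENNReal.ofReal s * ∑ Q ∈ F, lam Q * ((∑ Q' ∈ F with Q' ⊆ Q, lam Q') / σ Q) ^ (s - 1) := by
        gcongr with Q hQ
        exact lintegral_indicator_mul_rpow_sum_subset_le hmeas (by linarith) (by linarith) lam
          (hmeas Q hQ) (hσ0 Q hQ) (hσtop Q hQ)

theorem lintegral_rpow_sum_indicator_le (hF : IsNestedOrDisjoint (F : Set (Set X)))
    (hmeas : ∀ Q ∈ F, MeasurableSet Q) {s : ℝ} (hs : 1 < s) (lam : Set X → ℝ≥0∞)
    (hlam : ∀ Q ∈ F, lam Q ≠ ⊤) (hσ0 : ∀ Q ∈ F, σ Q ≠ 0) (hσtop : ∀ Q ∈ F, σ Q ≠ ⊤) :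
    ∫⁻ x, (∑ Q ∈ F, Q.indicator (fun _ => lam Q / σ Q) x) ^ s ∂σ ≤
      ENNReal.ofReal s * (1 + ENNReal.ofReal (s - 1) ^ (s - 1)) *
        ∑ Q ∈ F, lam Q * ((∑ Q' ∈ F with Q' ⊆ Q, lam Q') / σ Q) ^ (s - 1) := by
  rcases le_or_gt s 2 with hs2 | hs2
  · refine (hF.lintegral_rpow_sum_indicator_le_of_le_two hmeas hs hs2 lam hσ0 hσtop).trans ?_
    gcongr
    exact le_mul_of_one_le_right' le_self_add
  · refine (hF.lintegral_rpow_sum_indicator_le_of_two_lt hmeas hs2 lam hlam hσ0).trans ?_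
    gcongr
    exact le_add_self

theorem lintegral_rpow_sum_subtype_indicator_le (h𝒟 : IsNestedOrDisjoint 𝒟)
    (hmeas : ∀ Q ∈ 𝒟, MeasurableSet Q) {s : ℝ} (hs : 1 < s) (lam : Set X → ℝ≥0∞)
    {F : Finset 𝒟} (hlam : ∀ Q ∈ F, lam Q ≠ ⊤) (hσ0 : ∀ Q ∈ F, σ Q ≠ 0)
    (hσtop : ∀ Q ∈ F, σ Q ≠ ⊤) :
    ∫⁻ x, (∑ Q ∈ F, (Q : Set X).indicator (fun _ => lam Q / σ Q) x) ^ s ∂σ ≤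
      ENNReal.ofReal s * (1 + ENNReal.ofReal (s - 1) ^ (s - 1)) * ∑ Q ∈ F, lam Q *
        ((∑' Q' : {R : Set X // R ∈ 𝒟 ∧ R ⊆ Q}, lam Q') / σ Q) ^ (s - 1) := by
  set G := F.map (Function.Embedding.subtype (· ∈ 𝒟))
  have hG : ↑G ⊆ 𝒟 := by simp [G]
  calc ∫⁻ x, (∑ Q ∈ F, (Q : Set X).indicator (fun _ => lam Q / σ Q) x) ^ s ∂σ
      = ∫⁻ x, (∑ Q ∈ G, Q.indicator (fun _ => lam Q / σ Q) x) ^ s ∂σ := by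
        simp [G, Finset.sum_map]
    _ ≤ ENNReal.ofReal s * (1 + ENNReal.ofReal (s - 1) ^ (s - 1)) *
          ∑ Q ∈ G, lam Q * ((∑ Q' ∈ G with Q' ⊆ Q, lam Q') / σ Q) ^ (s - 1) :=
        (h𝒟.mono hG).lintegral_rpow_sum_indicator_le (fun Q hQ => hmeas Q (hG hQ)) hs lam
          (Finset.forall_mem_map.2 hlam) (Finset.forall_mem_map.2 hσ0)
          (Finset.forall_mem_map.2 hσtop)
    _ ≤ _ := by
        rw [Finset.sum_map]
        simp only [Function.Embedding.coe_subtype]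
        gcongr with Q
        exact sum_filter_subset_le_tsum hG lam Q

theorem lintegral_rpow_tsum_indicator_le (h𝒟 : IsNestedOrDisjoint 𝒟)
    (hmeas : ∀ Q ∈ 𝒟, MeasurableSet Q) {s : ℝ} (hs : 1 < s) (lam : Set X → ℝ≥0∞) :
    ∫⁻ x, (∑' Q : 𝒟, (Q : Set X).indicator (fun _ => lam Q / σ Q) x) ^ s ∂σ ≤
      ENNReal.ofReal s * (1 + ENNReal.ofReal (s - 1) ^ (s - 1)) * ∑' Q : 𝒟, lam Q *
        ((∑' Q' : {R : Set X // R ∈ 𝒟 ∧ R ⊆ Q}, lam Q') / σ Q) ^ (s - 1) := by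
  have hs0 : 0 < s - 1 := by linarith
  set A : Set X → ℝ≥0∞ := fun Q => ∑' Q' : {R : Set X // R ∈ 𝒟 ∧ R ⊆ Q}, lam Q'
  set term : 𝒟 → ℝ≥0∞ := fun Q => lam Q * (A Q / σ Q) ^ (s - 1)
  rcases eq_or_ne (tsum term) ⊤ with htop | htop
  · rw [htop, ENNReal.mul_top (by simp [hs.trans' one_pos])]
    exact le_top
  have hlamA : ∀ Q : 𝒟, lam Q ≤ A Q := fun ⟨Q, hQ⟩ =>
    ENNReal.le_tsum (⟨Q, hQ, subset_rfl⟩ : {R : Set X // R ∈ 𝒟 ∧ R ⊆ Q})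
  -- only the countably many cubes with `term Q ≠ 0` matter, and on those all quantities are finite
  have hfacts : ∀ Q, term Q ≠ 0 → lam Q ≠ ⊤ ∧ σ Q ≠ 0 ∧ σ Q ≠ ⊤ := fun Q hQ =>
    ENNReal.ne_top_and_ne_zero_and_ne_top_of_mul_div_rpow hs0 (hlamA Q) hQ
      (ENNReal.ne_top_of_tsum_ne_top htop Q)
  refine lintegral_rpow_tsum_le_of_forall_finset
    (fun Q : 𝒟 => measurable_const.indicator (hmeas Q Q.2))
    (Summable.countable_support_ennreal (f := term) htop) (fun Q hQ => ?_) (by linarith)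
    fun F hF => ?_
  · rw [ENNReal.div_eq_zero_of_mul_div_rpow_eq_zero hs0 (hlamA Q) (Function.notMem_support.1 hQ)]
    ext x
    simp
  refine (h𝒟.lintegral_rpow_sum_subtype_indicator_le hmeas hs lam
    (fun Q hQ => (hfacts Q (hF hQ)).1) (fun Q hQ => (hfacts Q (hF hQ)).2.1)
    (fun Q hQ => (hfacts Q (hF hQ)).2.2)).trans ?_
  gcongr
  exact ENNReal.sum_le_tsum F

end IsNestedOrDisjoint

/-- The `L^s` covering lemma: for `1 < s < ∞`,
`∫ (Σ_Q (λ_Q/σ(Q)) 1_Q)^s dσ ≤ C_s Σ_Q λ_Q (σ(Q)⁻¹ Σ_{Q'⊆Q} λ_{Q'})^{s-1}`. -/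
theorem lintegral_sum_indicator_rpow_le (s : ℝ) (hs : 1 < s) :
    ∃ C : ℝ≥0∞, 0 < C ∧ C ≠ ∞ ∧
      ∀ (X : Type) [MeasurableSpace X] (σ : Measure X) (𝒟 : Set (Set X)),
        (∀ Q ∈ 𝒟, MeasurableSet Q) →
        (∀ Q ∈ 𝒟, ∀ Q' ∈ 𝒟, Q ⊆ Q' ∨ Q' ⊆ Q ∨ Disjoint Q Q') →
        ∀ lam : Set X → ℝ≥0∞,
        (∫⁻ x, (∑' Q : 𝒟, Set.indicator (Q : Set X)
              (fun _ => lam Q / σ Q) x) ^ s ∂σ)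
          ≤ C * ∑' Q : 𝒟, lam Q *
              ((∑' Q' : {R : Set X // R ∈ 𝒟 ∧ R ⊆ (Q : Set X)}, lam Q') / σ Q)
                ^ (s - 1) :=
  ⟨ENNReal.ofReal s * (1 + ENNReal.ofReal (s - 1) ^ (s - 1)),
    ENNReal.mul_pos (by simp [hs.trans' one_pos]) (by simp), by finiteness,
    fun _ _ _ _ hmeas h𝒟 lam => IsNestedOrDisjoint.lintegral_rpow_tsum_indicator_le h𝒟 hmeas hs lam⟩
end

section
/- Let 𝒟 be a dyadic grid on a non-atomic measure space (X, μ), let 0 < β₁, …, β_m with Σᵢ βᵢ = β < 1, let Q ∈ 𝒟 with 0 < μ(Q) < ∞, let 𝒮 ⊆ {Q' ∈ 𝒟 : Q' ⊆ Q} be a family admitting pairwise disjoint subsets E(Q') ⊆ Q' with μ(E(Q')) ≥ η μ(Q'), and let w₁, …, w_m ≥ 0 be locally integrable. Then Σ_{Q' ∈ 𝒮} μ(Q') Πᵢ ⟨wᵢ⟩_{Q'}^{βᵢ} ≤ (C/η) · max(1/β, 1/(1−β)) · μ(Q) · Πᵢ ⟨wᵢ⟩_Q^{βᵢ}, with C absolute.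 -/
open MeasureTheory ENNReal
open scoped Classical NNReal

/-!
A stopping time inside a cube `R`, with `A = ∏ᵢ ⟨wᵢ⟩_R ^ βᵢ`, replaces the maximal function.
The cubes of `𝒮` whose product of averages is at most `2 ^ β * A` contribute at most
`2 ^ β η⁻¹ μ(R) A`, by sparseness. The others lie below their maximal elements `J`, which are
disjoint. By Hölder, `∑_J μ(J) ∏ᵢ ⟨wᵢ⟩_J ^ βᵢ ≤ μ(⋃ J) ^ (1 - β) ∏ᵢ (∫_R wᵢ) ^ βᵢ`, and the left
side exceeds `2 ^ β A μ(⋃ J)`; this forces `μ(⋃ J) ≤ μ(R) / 2`, so the maximal cubes contribute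
at most `2 ^ (β - 1) μ(R) A`. Induction below each `J` closes for any constant `c` with
`2 ^ β + 2 ^ (β - 1) (1 + c) ≤ c` when `η ≤ 1`, e.g. `c = 6 / (1 - β)`; when `η > 1` every
cube of `𝒮` is null.
-/

theorem ENNReal.rpow_sum {ι : Type*} (s : Finset ι) (f : ι → ℝ) {x : ℝ≥0∞} (h0 : x ≠ 0)
    (ht : x ≠ ∞) : x ^ (∑ i ∈ s, f i) = ∏ i ∈ s, x ^ f i := by
  induction s using Finset.cons_induction with
  | empty => simp
  | cons a s ha ih => rw [Finset.sum_cons, Finset.prod_cons, ENNReal.rpow_add _ _ h0 ht, ih]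

theorem ENNReal.sum_prod_rpow_le_prod_sum_rpow {ι κ : Type*} (s : Finset κ) (t : Finset ι)
    (f : ι → κ → ℝ≥0∞) {p : ι → ℝ} (hp : ∑ i ∈ t, p i = 1) (hp0 : ∀ i ∈ t, 0 ≤ p i) :
    ∑ j ∈ s, ∏ i ∈ t, f i j ^ p i ≤ ∏ i ∈ t, (∑ j ∈ s, f i j) ^ p i := by
  let _ : MeasurableSpace κ := ⊤
  have := lintegral_prod_norm_pow_le (μ := Measure.count.restrict (s : Set κ)) (f := f) t
    (fun i _ => measurable_from_top.aemeasurable) hp hp0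
  simpa [lintegral_finset] using this

theorem ENNReal.sum_rpow_mul_prod_rpow_le {ι κ : Type*} [Fintype ι] (s : Finset κ)
    (a : κ → ℝ≥0∞) (f : ι → κ → ℝ≥0∞) {β : ι → ℝ} (hβ : ∀ i, 0 ≤ β i) (hβ1 : ∑ i, β i ≤ 1) :
    ∑ j ∈ s, a j ^ (1 - ∑ i, β i) * ∏ i, f i j ^ β i
      ≤ (∑ j ∈ s, a j) ^ (1 - ∑ i, β i) * ∏ i, (∑ j ∈ s, f i j) ^ β i := by
  have := ENNReal.sum_prod_rpow_le_prod_sum_rpow s Finset.univ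
    (fun o : Option ι => o.elim a f) (p := fun o : Option ι => o.elim (1 - ∑ i, β i) β)
    (by simp [Fintype.sum_option]) (by rintro (_ | i) _ <;> simp [hβ, hβ1])
  simpa [Fintype.prod_option] using this

theorem ENNReal.two_mul_le_of_rpow_mul_le {s v : ℝ≥0∞} {b : ℝ} (hb : 0 < b) (hs : s ≠ ∞)
    (h : 2 ^ b * s ≤ s ^ (1 - b) * v ^ b) : 2 * s ≤ v := by
  rcases eq_or_ne s 0 with rfl | hs0
  · simp
  have hsplit : s = s ^ b * s ^ (1 - b) := by
    rw [← ENNReal.rpow_add _ _ hs0 hs, add_sub_cancel, ENNReal.rpow_one]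
  have hcancel : 2 ^ b * s ^ b * s ^ (1 - b) ≤ v ^ b * s ^ (1 - b) := by
    rw [mul_assoc, ← hsplit, mul_comm (v ^ b)]
    exact h
  rw [ENNReal.mul_le_mul_iff_left (ENNReal.rpow_pos (pos_iff_ne_zero.2 hs0) hs).ne'
    (ENNReal.rpow_ne_top_of_ne_zero hs0 hs), ← ENNReal.mul_rpow_of_nonneg _ _ hb.le]
    at hcancel
  exact (ENNReal.rpow_le_rpow_iff hb).1 hcancel

theorem ENNReal.two_rpow_add_two_rpow_sub_one_mul_le {b : ℝ} (hb0 : 0 ≤ b) (hb1 : b < 1) :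
    (2 : ℝ≥0∞) ^ b + 2 ^ (b - 1) * (1 + ENNReal.ofReal (6 / (1 - b)))
      ≤ ENNReal.ofReal (6 / (1 - b)) := by
  have h1b : 0 < 1 - b := by linarith
  have hbern : (2 : ℝ) ^ b ≤ 1 + b := by
    simpa [one_add_one_eq_two] using
      rpow_one_add_le_one_add_mul_self (s := 1) (by norm_num) hb0 hb1.le
  have hreal : (2 : ℝ) ^ b + 2 ^ (b - 1) * (1 + 6 / (1 - b)) ≤ 6 / (1 - b) := by
    rw [Real.rpow_sub two_pos, Real.rpow_one, le_div_iff₀ h1b]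
    have h2b : 0 < (2 : ℝ) ^ b := by positivity
    field_simp
    nlinarith [mul_le_mul_of_nonneg_right hbern h1b.le]
  calc (2 : ℝ≥0∞) ^ b + 2 ^ (b - 1) * (1 + ENNReal.ofReal (6 / (1 - b)))
      = ENNReal.ofReal ((2 : ℝ) ^ b + 2 ^ (b - 1) * (1 + 6 / (1 - b))) := by
        rw [ENNReal.ofReal_add (by positivity) (by positivity), ENNReal.ofReal_mul (by positivity),
          ENNReal.ofReal_add zero_le_one (by positivity), ENNReal.ofReal_one,
          ← ENNReal.ofReal_rpow_of_pos two_pos, ← ENNReal.ofReal_rpow_of_pos two_pos,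
          ENNReal.ofReal_ofNat]
    _ ≤ ENNReal.ofReal (6 / (1 - b)) := ENNReal.ofReal_le_ofReal hreal

theorem Finset.sum_le_sum_sum_filter_of_forall_exists {α β M : Type*}
    [AddCommMonoid M] [PartialOrder M] [CanonicallyOrderedAdd M]
    (s : Finset α) (t : Finset β) (r : α → β → Prop) (f : α → M)
    (h : ∀ a ∈ s, ∃ b ∈ t, r a b) :
    ∑ a ∈ s, f a ≤ ∑ b ∈ t, ∑ a ∈ s with r a b, f a := by
  calc ∑ a ∈ s, f a ≤ ∑ a ∈ s, ∑ b ∈ t with r a b, f a := by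
        refine Finset.sum_le_sum fun a ha => ?_
        obtain ⟨b, hb, hab⟩ := h a ha
        exact Finset.single_le_sum (f := fun _ => f a) (fun _ _ => zero_le)
          (Finset.mem_filter.2 ⟨hb, hab⟩)
    _ = ∑ b ∈ t, ∑ a ∈ s with r a b, f a :=
        Finset.sum_comm' fun a b => by simp only [Finset.mem_filter]; tauto

theorem Finset.pairwiseDisjoint_filter_maximal {X : Type*} {F : Finset (Set X)}
    (hF : ∀ P ∈ F, ∀ P' ∈ F, P ⊆ P' ∨ P' ⊆ P ∨ Disjoint P P') :
    (F.filter (Maximal (· ∈ F)) : Set (Set X)).PairwiseDisjoint id := by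
  intro J hJ J' hJ' hne
  simp only [Finset.coe_filter, Set.mem_ofPred_eq] at hJ hJ'
  rcases hF J hJ.1 J' hJ'.1 with h | h | h
  · exact absurd (hJ.2.eq_of_le hJ'.1 h) hne
  · exact absurd (hJ'.2.eq_of_le hJ.1 h).symm hne
  · exact h

noncomputable def avgProd {X ι : Type*} [MeasurableSpace X] [Fintype ι] (μ : Measure X)
    (β : ι → ℝ) (w : ι → X → ℝ≥0∞) (P : Set X) : ℝ≥0∞ :=
  ∏ i, avg μ P (w i) ^ β i

section avgProd

variable {X ι : Type*} [MeasurableSpace X] [Fintype ι] {μ : Measure X} {β : ι → ℝ}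
  {w : ι → X → ℝ≥0∞} {P R : Set X}

theorem avgProd_mul_rpow_sum (hβ : ∀ i, 0 ≤ β i) (h0 : μ P ≠ 0) (ht : μ P ≠ ∞) :
    avgProd μ β w P * μ P ^ (∑ i, β i) = ∏ i, (∫⁻ x in P, w i x ∂μ) ^ β i := by
  rw [avgProd, ENNReal.rpow_sum _ _ h0 ht, ← Finset.prod_mul_distrib]
  refine Finset.prod_congr rfl fun i _ => ?_
  rw [← ENNReal.mul_rpow_of_nonneg _ _ (hβ i), avg, ENNReal.div_mul_cancel h0 ht]

theorem measure_mul_avgProd (hβ : ∀ i, 0 ≤ β i) (hβ1 : ∑ i, β i < 1) (ht : μ P ≠ ∞) :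
    μ P * avgProd μ β w P = μ P ^ (1 - ∑ i, β i) * ∏ i, (∫⁻ x in P, w i x ∂μ) ^ β i := by
  rcases eq_or_ne (μ P) 0 with h0 | h0
  · rw [h0, zero_mul, ENNReal.zero_rpow_of_pos (by linarith), zero_mul]
  rw [← avgProd_mul_rpow_sum hβ h0 ht, mul_left_comm, mul_comm (μ P ^ _),
    ← ENNReal.rpow_add _ _ h0 ht, add_sub_cancel, ENNReal.rpow_one, mul_comm]

theorem sum_measure_mul_avgProd_le_of_pairwiseDisjoint (hβ : ∀ i, 0 ≤ β i) (hβ1 : ∑ i, β i < 1)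
    {G : Finset (Set X)} (hGd : (G : Set (Set X)).PairwiseDisjoint id)
    (hGm : ∀ J ∈ G, MeasurableSet J) (hGR : ∀ J ∈ G, J ⊆ R) (hR : μ R ≠ ∞) :
    ∑ J ∈ G, μ J * avgProd μ β w J
      ≤ μ (⋃ J ∈ G, J) ^ (1 - ∑ i, β i) * ∏ i, (∫⁻ x in R, w i x ∂μ) ^ β i := by
  calc ∑ J ∈ G, μ J * avgProd μ β w J
      = ∑ J ∈ G, μ J ^ (1 - ∑ i, β i) * ∏ i, (∫⁻ x in J, w i x ∂μ) ^ β i :=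
        Finset.sum_congr rfl fun J hJ =>
          measure_mul_avgProd hβ hβ1 (ne_top_of_le_ne_top hR (measure_mono (hGR J hJ)))
    _ ≤ (∑ J ∈ G, μ J) ^ (1 - ∑ i, β i) * ∏ i, (∑ J ∈ G, ∫⁻ x in J, w i x ∂μ) ^ β i :=
        ENNReal.sum_rpow_mul_prod_rpow_le G _ _ hβ hβ1.le
    _ = μ (⋃ J ∈ G, J) ^ (1 - ∑ i, β i) * ∏ i, (∫⁻ x in ⋃ J ∈ G, J, w i x ∂μ) ^ β i := by
        simp only [measure_biUnion_finset (f := fun J => J) hGd hGm,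
          lintegral_biUnion_finset (t := fun J => J) hGd hGm]
    _ ≤ μ (⋃ J ∈ G, J) ^ (1 - ∑ i, β i) * ∏ i, (∫⁻ x in R, w i x ∂μ) ^ β i := by
        gcongr with i
        · exact hβ i
        · exact Set.iUnion₂_subset hGR

theorem two_mul_measure_biUnion_le (hβ : ∀ i, 0 < β i) (hβ1 : ∑ i, β i < 1)
    {G : Finset (Set X)} (hGd : (G : Set (Set X)).PairwiseDisjoint id)
    (hGm : ∀ J ∈ G, MeasurableSet J) (hGR : ∀ J ∈ G, J ⊆ R) (hR : μ R ≠ ∞)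
    (hG : ∀ J ∈ G, 2 ^ (∑ i, β i) * avgProd μ β w R < avgProd μ β w J) :
    2 * μ (⋃ J ∈ G, J) ≤ μ R := by
  set b := ∑ i, β i
  set A := avgProd μ β w R
  have hUR : μ (⋃ J ∈ G, J) ≤ μ R := measure_mono (Set.iUnion₂_subset hGR)
  have hU : μ (⋃ J ∈ G, J) = ∑ J ∈ G, μ J := measure_biUnion_finset (f := fun J => J) hGd hGm
  rcases eq_or_ne (μ (⋃ J ∈ G, J)) 0 with hs0 | hs0
  · simp [hs0]
  obtain ⟨J₀, hJ₀⟩ : G.Nonempty :=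
    Finset.nonempty_iff_ne_empty.2 fun hG => hs0 (by simp [hG])
  have hb : 0 < b := by
    rcases isEmpty_or_nonempty ι with hι | ⟨⟨i⟩⟩
    · simpa [b, A, avgProd] using hG J₀ hJ₀
    · exact (hβ i).trans_le (Finset.single_le_sum (fun i _ => (hβ i).le) (Finset.mem_univ i))
  have hA : A ≠ ∞ := ne_top_of_le_ne_top (hG J₀ hJ₀).ne_top
    (le_mul_of_one_le_left zero_le (ENNReal.one_le_rpow one_le_two hb))
  have hV0 : μ R ≠ 0 := fun h => hs0 (le_antisymm (hUR.trans h.le) zero_le)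
  have hHolder : ∑ J ∈ G, μ J * avgProd μ β w J ≤ μ (⋃ J ∈ G, J) ^ (1 - b) * (A * μ R ^ b) := by
    rw [avgProd_mul_rpow_sum (fun i => (hβ i).le) hV0 hR]
    exact sum_measure_mul_avgProd_le_of_pairwiseDisjoint (fun i => (hβ i).le) hβ1 hGd hGm hGR hR
  have hlower : 2 ^ b * A * μ (⋃ J ∈ G, J) ≤ ∑ J ∈ G, μ J * avgProd μ β w J := by
    rw [hU, Finset.mul_sum]
    exact Finset.sum_le_sum fun J hJ => by rw [mul_comm]; gcongr; exact (hG J hJ).le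
  -- if `A = 0` the lower bound is useless, but then the upper bound forces `μ J = 0` on `G`
  have hA0 : A ≠ 0 := by
    intro hA0
    rw [hA0, zero_mul, mul_zero] at hHolder
    refine hs0 (hU.trans (Finset.sum_eq_zero fun J hJ => ?_))
    have hJ0 : μ J * avgProd μ β w J = 0 := le_antisymm
      ((Finset.single_le_sum (fun _ _ => zero_le) hJ).trans hHolder) zero_le
    exact (mul_eq_zero.1 hJ0).resolve_right (by simpa [hA0] using (hG J hJ).ne_bot)
  refine ENNReal.two_mul_le_of_rpow_mul_le hb (ne_top_of_le_ne_top hR hUR) ?_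
  rw [← ENNReal.mul_le_mul_iff_right hA0 hA]
  calc A * (2 ^ b * μ (⋃ J ∈ G, J)) = 2 ^ b * A * μ (⋃ J ∈ G, J) := by ring
    _ ≤ μ (⋃ J ∈ G, J) ^ (1 - b) * (A * μ R ^ b) := hlower.trans hHolder
    _ = A * (μ (⋃ J ∈ G, J) ^ (1 - b) * μ R ^ b) := by ring

theorem sum_measure_mul_avgProd_le_two_rpow_sub_one_mul (hβ : ∀ i, 0 < β i)
    (hβ1 : ∑ i, β i < 1) {G : Finset (Set X)} (hGd : (G : Set (Set X)).PairwiseDisjoint id)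
    (hGm : ∀ J ∈ G, MeasurableSet J) (hGR : ∀ J ∈ G, J ⊆ R) (hR : μ R ≠ ∞)
    (hG : ∀ J ∈ G, 2 ^ (∑ i, β i) * avgProd μ β w R < avgProd μ β w J) :
    ∑ J ∈ G, μ J * avgProd μ β w J ≤ 2 ^ (∑ i, β i - 1) * (μ R * avgProd μ β w R) :=
  calc ∑ J ∈ G, μ J * avgProd μ β w J
      ≤ μ (⋃ J ∈ G, J) ^ (1 - ∑ i, β i) * ∏ i, (∫⁻ x in R, w i x ∂μ) ^ β i :=
        sum_measure_mul_avgProd_le_of_pairwiseDisjoint (fun i => (hβ i).le) hβ1 hGd hGm hGR hR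
    _ ≤ (μ R / 2) ^ (1 - ∑ i, β i) * ∏ i, (∫⁻ x in R, w i x ∂μ) ^ β i := by
        gcongr
        rw [ENNReal.le_div_iff_mul_le (Or.inl two_ne_zero) (Or.inl ofNat_ne_top), mul_comm]
        exact two_mul_measure_biUnion_le hβ hβ1 hGd hGm hGR hR hG
    _ = 2 ^ (∑ i, β i - 1) * (μ R * avgProd μ β w R) := by
        rw [measure_mul_avgProd (fun i => (hβ i).le) hβ1 hR,
          ENNReal.div_rpow_of_nonneg _ _ (by linarith), div_eq_mul_inv, ← ENNReal.rpow_neg,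
          neg_sub]
        ring

end avgProd

/-- An `η`-sparse family of cubes of a dyadic grid, with `E` the sets witnessing sparseness. -/
structure IsSparseFamily {X : Type*} [MeasurableSpace X] (μ : Measure X) (η : ℝ≥0∞)
    (E : Set X → Set X) (𝒮 : Set (Set X)) : Prop where
  measurableSet : ∀ P ∈ 𝒮, MeasurableSet P
  nested : ∀ P ∈ 𝒮, ∀ P' ∈ 𝒮, P ⊆ P' ∨ P' ⊆ P ∨ Disjoint P P'
  subset : ∀ P ∈ 𝒮, E P ⊆ P
  measurableSet_witness : ∀ P ∈ 𝒮, MeasurableSet (E P)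
  mul_measure_le : ∀ P ∈ 𝒮, η * μ P ≤ μ (E P)
  disjoint : ∀ P ∈ 𝒮, ∀ P' ∈ 𝒮, P ≠ P' → Disjoint (E P) (E P')

namespace IsSparseFamily

variable {X ι : Type*} [MeasurableSpace X] [Fintype ι] {μ : Measure X} {η : ℝ≥0∞}
  {E : Set X → Set X} {𝒮 : Set (Set X)} {β : ι → ℝ} {w : ι → X → ℝ≥0∞} {R : Set X}

theorem mul_sum_measure_le (h : IsSparseFamily μ η E 𝒮) {F : Finset (Set X)}
    (hF : (F : Set (Set X)) ⊆ 𝒮) (hFR : ∀ P ∈ F, P ⊆ R) :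
    η * ∑ P ∈ F, μ P ≤ μ R :=
  calc η * ∑ P ∈ F, μ P = ∑ P ∈ F, η * μ P := Finset.mul_sum _ _ _
    _ ≤ ∑ P ∈ F, μ (E P) := Finset.sum_le_sum fun P hP => h.mul_measure_le P (hF hP)
    _ = μ (⋃ P ∈ F, E P) := (measure_biUnion_finset
          (fun P hP P' hP' => h.disjoint P (hF hP) P' (hF hP'))
          fun P hP => h.measurableSet_witness P (hF hP)).symm
    _ ≤ μ R := measure_mono (Set.iUnion₂_subset fun P hP => (h.subset P (hF hP)).trans (hFR P hP))

theorem sum_measure_mul_le (h : IsSparseFamily μ η E 𝒮) (hη0 : η ≠ 0)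
    {F : Finset (Set X)} (hF : (F : Set (Set X)) ⊆ 𝒮) (hR : μ R ≠ ∞) (hFR : ∀ P ∈ F, P ⊆ R)
    {g : Set X → ℝ≥0∞} {t : ℝ≥0∞} (hg : ∀ P ∈ F, g P ≤ t) :
    ∑ P ∈ F, μ P * g P ≤ t * η⁻¹ * μ R :=
  calc ∑ P ∈ F, μ P * g P ≤ ∑ P ∈ F, μ P * t := Finset.sum_le_sum fun P hP => by gcongr; exact hg P hP
    _ = t * ∑ P ∈ F, μ P := by rw [← Finset.sum_mul, mul_comm]
    _ ≤ t * (μ R / η) := by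
        gcongr
        rw [ENNReal.le_div_iff_mul_le (Or.inl hη0) (Or.inr hR), mul_comm]
        exact h.mul_sum_measure_le hF hFR
    _ = t * η⁻¹ * μ R := by rw [div_eq_mul_inv]; ring

theorem measure_eq_zero_of_one_lt (h : IsSparseFamily μ η E 𝒮) (hη : 1 < η) {P : Set X}
    (hP : P ∈ 𝒮) (hPt : μ P ≠ ∞) : μ P = 0 := by
  by_contra hP0
  have : η * μ P ≤ 1 * μ P := by
    rw [one_mul]; exact (h.mul_measure_le P hP).trans (measure_mono (h.subset P hP))
  exact hη.not_ge ((ENNReal.mul_le_mul_iff_left hP0 hPt).1 this)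

theorem sum_measure_mul_avgProd_le (h : IsSparseFamily μ η E 𝒮) (hβ : ∀ i, 0 < β i)
    (hβ1 : ∑ i, β i < 1) (hη0 : η ≠ 0) (hη1 : η ≤ 1) {c : ℝ≥0∞}
    (hc : 2 ^ (∑ i, β i) + 2 ^ (∑ i, β i - 1) * (1 + c) ≤ c)
    (F : Finset (Set X)) (hF : (F : Set (Set X)) ⊆ 𝒮) (hR : μ R ≠ ∞) (hFR : ∀ P ∈ F, P ⊆ R) :
    ∑ P ∈ F, μ P * avgProd μ β w P ≤ c / η * (μ R * avgProd μ β w R) := by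
  induction F using Finset.strongInduction generalizing R with
  | H F ih =>
  set b := ∑ i, β i
  set A := avgProd μ β w R
  set f : Set X → ℝ≥0∞ := fun P => μ P * avgProd μ β w P
  set F₂ := F.filter fun P => 2 ^ b * A < avgProd μ β w P
  set G := F₂.filter (Maximal (· ∈ F₂))
  have hF₂F : F₂ ⊆ F := Finset.filter_subset _ _
  have hGF : G ⊆ F := (Finset.filter_subset _ _).trans hF₂F
  have hGd : (G : Set (Set X)).PairwiseDisjoint id := Finset.pairwiseDisjoint_filter_maximal
    fun P hP P' hP' => h.nested P (hF (hF₂F hP)) P' (hF (hF₂F hP'))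
  have hGm : ∀ J ∈ G, MeasurableSet J := fun J hJ => h.measurableSet J (hF (hGF hJ))
  have hGR : ∀ J ∈ G, J ⊆ R := fun J hJ => hFR J (hGF hJ)
  have hsmall : ∑ P ∈ F with ¬(2 ^ b * A < avgProd μ β w P), f P ≤ 2 ^ b * A * η⁻¹ * μ R :=
    h.sum_measure_mul_le hη0 ((Finset.coe_subset.2 (Finset.filter_subset _ _)).trans hF) hR
      (fun P hP => hFR P (Finset.mem_of_mem_filter P hP)) fun P hP =>
        not_lt.1 (Finset.mem_filter.1 hP).2
  have hmaximal : ∑ J ∈ G, f J ≤ 2 ^ (b - 1) * (μ R * A) :=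
    sum_measure_mul_avgProd_le_two_rpow_sub_one_mul hβ hβ1 hGd hGm hGR hR
      fun J hJ => (Finset.mem_filter.1 (Finset.mem_of_mem_filter J hJ)).2
  have hlarge : ∑ P ∈ F₂, f P ≤ (1 + c / η) * ∑ J ∈ G, f J :=
    calc ∑ P ∈ F₂, f P ≤ ∑ J ∈ G, ∑ P ∈ F₂ with P ⊆ J, f P :=
          Finset.sum_le_sum_sum_filter_of_forall_exists _ _ _ _ fun P hP => by
            obtain ⟨J, hPJ, hJ⟩ := F₂.exists_le_maximal hP
            exact ⟨J, Finset.mem_filter.2 ⟨hJ.prop, hJ⟩, hPJ⟩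
      _ = ∑ J ∈ G, (f J + ∑ P ∈ (F₂.filter fun P => P ⊆ J).erase J, f P) :=
          Finset.sum_congr rfl fun J hJ => (Finset.add_sum_erase (F₂.filter fun P => P ⊆ J) f
            (Finset.mem_filter.2 ⟨Finset.mem_of_mem_filter J hJ, subset_rfl⟩)).symm
      _ ≤ ∑ J ∈ G, (f J + c / η * f J) := by
          gcongr with J hJ
          have hsub : (F₂.filter fun P => P ⊆ J).erase J ⊂ F :=
            (Finset.erase_subset_erase J ((Finset.filter_subset _ _).trans hF₂F)).trans_ssubset
              (Finset.erase_ssubset (hGF hJ))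
          exact ih _ hsub ((Finset.coe_subset.2 hsub.subset).trans hF)
            (ne_top_of_le_ne_top hR (measure_mono (hGR J hJ)))
            fun P hP => (Finset.mem_filter.1 (Finset.mem_of_mem_erase hP)).2
      _ = (1 + c / η) * ∑ J ∈ G, f J := by
          rw [add_mul, one_mul, Finset.mul_sum, Finset.sum_add_distrib]
  calc ∑ P ∈ F, f P
      = ∑ P ∈ F with ¬(2 ^ b * A < avgProd μ β w P), f P + ∑ P ∈ F₂, f P :=
        (Finset.sum_filter_not_add_sum_filter _ _ _).symm
    _ ≤ 2 ^ b * A * η⁻¹ * μ R + (1 + c / η) * (2 ^ (b - 1) * (μ R * A)) :=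
        add_le_add hsmall (hlarge.trans (by gcongr))
    _ ≤ 2 ^ b * A * η⁻¹ * μ R + (η⁻¹ + c * η⁻¹) * (2 ^ (b - 1) * (μ R * A)) := by
        rw [div_eq_mul_inv]
        gcongr
        exact ENNReal.one_le_inv.2 hη1
    _ = (2 ^ b + 2 ^ (b - 1) * (1 + c)) * η⁻¹ * (μ R * A) := by ring
    _ ≤ c / η * (μ R * A) := by
        rw [div_eq_mul_inv]
        gcongr

theorem tsum_measure_mul_avgProd_le (h : IsSparseFamily μ η E 𝒮) (hβ : ∀ i, 0 < β i)
    (hβ1 : ∑ i, β i < 1) (hη0 : η ≠ 0) {c : ℝ≥0∞}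
    (hc : 2 ^ (∑ i, β i) + 2 ^ (∑ i, β i - 1) * (1 + c) ≤ c)
    (hR : μ R ≠ ∞) (h𝒮R : ∀ P ∈ 𝒮, P ⊆ R) :
    ∑' P : 𝒮, μ P * avgProd μ β w P ≤ c / η * (μ R * avgProd μ β w R) := by
  rcases le_or_gt η 1 with hη1 | hη1
  · refine Summable.tsum_le_of_sum_le ENNReal.summable fun u => ?_
    refine (Finset.sum_map u (Function.Embedding.subtype _)
      fun P => μ P * avgProd μ β w P).symm.trans_le ?_
    refine h.sum_measure_mul_avgProd_le hβ hβ1 hη0 hη1 hc _ (fun P hP => ?_) hR fun P hP => ?_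
    all_goals obtain ⟨P, -, rfl⟩ := Finset.mem_map.1 hP
    exacts [P.2, h𝒮R P P.2]
  · refine le_of_eq_of_le (ENNReal.tsum_eq_zero.2 fun P => ?_) zero_le
    rw [h.measure_eq_zero_of_one_lt hη1 P.2
      (ne_top_of_le_ne_top hR (measure_mono (h𝒮R P P.2))), zero_mul]

end IsSparseFamily

/-- Sparse packing for products of averages with total exponent `β < 1`:
if `𝒮` is an `η`-sparse family of subcubes of `Q`, then
`Σ_{Q' ∈ 𝒮} μ(Q') Πᵢ ⟨wᵢ⟩_{Q'}^{βᵢ}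
  ≤ (C/η) max(1/β, 1/(1-β)) μ(Q) Πᵢ ⟨wᵢ⟩_Q^{βᵢ}`, with `C` absolute. -/
theorem sparse_sum_products_of_averages :
    ∃ C : ℝ≥0∞, 0 < C ∧ C ≠ ∞ ∧
      ∀ (X : Type) [MeasurableSpace X] (μ : Measure X) [NullSingletonClass μ]
        (𝒟 : Set (Set X)),
        (∀ Q ∈ 𝒟, MeasurableSet Q) →
        (∀ Q ∈ 𝒟, ∀ Q' ∈ 𝒟, Q ⊆ Q' ∨ Q' ⊆ Q ∨ Disjoint Q Q') →
        ∀ (m : ℕ) (β : Fin m → ℝ), (∀ i, 0 < β i) → (∑ i, β i) < 1 →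
        ∀ Q ∈ 𝒟, 0 < μ Q → μ Q < ∞ →
        ∀ (𝒮 : Set (Set X)), 𝒮 ⊆ {Q' ∈ 𝒟 | Q' ⊆ Q} →
        ∀ (η : ℝ≥0∞), 0 < η →
        ∀ E : Set X → Set X,
        (∀ Q' ∈ 𝒮, E Q' ⊆ Q' ∧ MeasurableSet (E Q') ∧ η * μ Q' ≤ μ (E Q')) →
        (∀ Q' ∈ 𝒮, ∀ Q'' ∈ 𝒮, Q' ≠ Q'' → Disjoint (E Q') (E Q'')) →
        ∀ w : Fin m → X → ℝ≥0∞, (∀ i, Measurable (w i)) →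
        (∑' Q' : 𝒮, μ (Q' : Set X) * ∏ i, (avg μ Q' (w i)) ^ β i)
          ≤ C / η * ENNReal.ofReal (max (1 / ∑ i, β i) (1 / (1 - ∑ i, β i))) *
              μ Q * ∏ i, (avg μ Q (w i)) ^ β i := by
  refine ⟨6, by norm_num, by norm_num, ?_⟩
  intro X _ μ _ 𝒟 h𝒟m h𝒟n m β hβ hβ1 Q _ _ hQ 𝒮 h𝒮 η hη E hE hEd w _
  have hsparse : IsSparseFamily μ η E 𝒮 :=
    { measurableSet := fun P hP => h𝒟m P (h𝒮 hP).1
      nested := fun P hP P' hP' => h𝒟n P (h𝒮 hP).1 P' (h𝒮 hP').1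
      subset := fun P hP => (hE P hP).1
      measurableSet_witness := fun P hP => (hE P hP).2.1
      mul_measure_le := fun P hP => (hE P hP).2.2
      disjoint := hEd }
  have hc : ENNReal.ofReal (6 / (1 - ∑ i, β i))
      ≤ 6 * ENNReal.ofReal (max (1 / ∑ i, β i) (1 / (1 - ∑ i, β i))) := by
    rw [← ENNReal.ofReal_ofNat 6, ← ENNReal.ofReal_mul (by norm_num), div_eq_mul_one_div]
    exact ENNReal.ofReal_le_ofReal (by gcongr; exact le_max_right _ _)
  calc ∑' P : 𝒮, μ P * ∏ i, avg μ P (w i) ^ β i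
      ≤ ENNReal.ofReal (6 / (1 - ∑ i, β i)) / η * (μ Q * avgProd μ β w Q) :=
        hsparse.tsum_measure_mul_avgProd_le hβ hβ1 hη.ne'
          (ENNReal.two_rpow_add_two_rpow_sub_one_mul_le (Finset.sum_nonneg fun i _ => (hβ i).le)
            hβ1) hQ.ne fun P hP => (h𝒮 hP).2
    _ ≤ 6 * ENNReal.ofReal (max (1 / ∑ i, β i) (1 / (1 - ∑ i, β i))) / η
          * (μ Q * avgProd μ β w Q) := by gcongr
    _ = 6 / η * ENNReal.ofReal (max (1 / ∑ i, β i) (1 / (1 - ∑ i, β i))) * μ Q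
          * ∏ i, avg μ Q (w i) ^ β i := by
        simp only [div_eq_mul_inv, avgProd]; ring
end
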